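/- arXiv:2603.10610 — 11 statements merged into one kernel-verified Lean document; each statement's English description precedes it below -/
import Mathlib

section
/- Let F be a family of subsets of [n] and for each maximal chain C in 2^[n] containing at least one member of F, let F(C) be the largest member of F ∩ C. If for every F ∈ F one has λ_{|F|}({G ∈ F : G ⊆ F}) ≤ B (the Lubell mass computed in the Boolean lattice 2^F), then λ_n(F) ≤ B. -/
open Finset

lemma choose_key {n a : ℕ} (h : a < n) :
    (n - a) * n.choose a = n * (n - 1).choose a := by
  obtain ⟨m, rfl⟩ : ∃ m, n = m + 1 := ⟨n - 1, by omega⟩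
  have ha : a ≤ m := by omega
  have h1 := Nat.add_one_mul_choose_eq m (m - a)
  rw [Nat.choose_symm ha] at h1
  have h2 : m - a + 1 = m + 1 - a := by omega
  rw [h2, Nat.choose_symm (by omega : a ≤ m + 1)] at h1
  simpa only [Nat.add_sub_cancel, mul_comm] using h1.symm

lemma lubell_aux {α : Type*} [DecidableEq α] (B : ℚ) (hB : 0 ≤ B) :
    ∀ (n : ℕ) (S : Finset α), S.card = n → ∀ (F : Finset (Finset α)),
      (∀ A ∈ F, A ⊆ S) →
      (∀ A ∈ F, (∑ G ∈ F.filter (· ⊆ A), (1 : ℚ) / (A.card.choose G.card)) ≤ B) →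
      (∑ A ∈ F, (1 : ℚ) / (S.card.choose A.card)) ≤ B := by
  intro n
  induction n using Nat.strong_induction_on with
  | _ n IH =>
    intro S hS F hsub h
    by_cases hSF : S ∈ F
    · have := h S hSF
      rwa [filter_true_of_mem (fun A hA => hsub A hA)] at this
    rcases F.eq_empty_or_nonempty with rfl | hFne
    · simpa using hB
    have hn : 0 < n := by
      by_contra h0
      obtain ⟨A, hA⟩ := hFne
      have hS0 : S = ∅ := card_eq_zero.mp (by omega)
      have hA0 : A = ∅ := subset_empty.mp (hS0 ▸ hsub A hA)
      exact hSF (by rwa [hS0, ← hA0])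
    have main : ∀ x ∈ S,
        (∑ A ∈ F.filter (fun A => x ∉ A), (1:ℚ) / ((n-1).choose A.card)) ≤ B := by
      intro x hx
      have hcard : (S.erase x).card = n - 1 := by rw [card_erase_of_mem hx, hS]
      have := IH (n-1) (by omega) (S.erase x) hcard (F.filter (fun A => x ∉ A))
        (fun A hA => by
          rw [mem_filter] at hA
          exact subset_erase.mpr ⟨hsub A hA.1, hA.2⟩)
        (fun A hA => by
          rw [mem_filter] at hA
          refine le_trans ?_ (h A hA.1)
          apply sum_le_sum_of_subset_of_nonneg
          · exact filter_subset_filter _ (filter_subset _ _)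
          · intro G _ _; positivity)
      rwa [hcard] at this
    have hswap : (∑ x ∈ S, ∑ A ∈ F.filter (fun A => x ∉ A), (1:ℚ) / ((n-1).choose A.card))
        = (n : ℚ) * ∑ A ∈ F, (1:ℚ) / (S.card.choose A.card) := by
      simp only [sum_filter]
      rw [Finset.sum_comm, Finset.mul_sum]
      refine Finset.sum_congr rfl fun A hA => ?_
      rw [← Finset.sum_filter]
      rw [Finset.sum_const, ← Finset.sdiff_eq_filter, card_sdiff_of_subset (hsub A hA), hS]
      have hlt : A.card < n := by
        have hss : A ⊂ S := ssubset_of_subset_of_ne (hsub A hA) (fun hAS => hSF (hAS ▸ hA))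
        have := card_lt_card hss
        omega
      have hk := choose_key hlt
      have h1 : (0:ℚ) < n.choose A.card := by
        exact_mod_cast Nat.choose_pos (le_of_lt hlt)
      have h2 : (0:ℚ) < (n-1).choose A.card := by
        exact_mod_cast Nat.choose_pos (by omega : A.card ≤ n - 1)
      rw [nsmul_eq_mul]
      have hkQ : ((n : ℚ) - A.card) * (n.choose A.card : ℚ)
          = (n : ℚ) * (((n-1).choose A.card : ℕ) : ℚ) := by
        rw [← Nat.cast_sub (le_of_lt hlt)]
        exact_mod_cast congrArg (Nat.cast (R := ℚ)) hk
      push_cast [Nat.cast_sub (le_of_lt hlt)]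
      field_simp
      linarith [hkQ]
    have : (n : ℚ) * (∑ A ∈ F, (1:ℚ) / (S.card.choose A.card)) ≤ (n : ℚ) * B := by
      rw [← hswap]
      calc (∑ x ∈ S, ∑ A ∈ F.filter (fun A => x ∉ A), (1:ℚ) / ((n-1).choose A.card))
          ≤ ∑ _x ∈ S, B := Finset.sum_le_sum main
        _ = (n : ℚ) * B := by rw [Finset.sum_const, hS, nsmul_eq_mul]
    have hnQ : (0:ℚ) < n := by exact_mod_cast hn
    exact le_of_mul_le_mul_left this hnQ

/-- If for every `A ∈ F` the Lubell mass (within `2^A`) of the members of `F` contained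
in `A` is at most `B`, then the Lubell mass of `F` in `2^[n]` is at most `B`. -/
theorem stmt2 (n : ℕ) (F : Finset (Finset (Fin n))) (B : ℚ) (hB : 0 ≤ B)
    (h : ∀ A ∈ F, (∑ G ∈ F.filter (· ⊆ A), (1 : ℚ) / (A.card.choose G.card)) ≤ B) :
    (∑ A ∈ F, (1 : ℚ) / (n.choose A.card)) ≤ B := by
  have := lubell_aux B hB n (Finset.univ : Finset (Fin n)) (by simp) F
    (fun A _ => subset_univ A) h
  simpa using this
end

section
/- Suppose G_1,...,G_h are subsets of [n], each satisfying | |G_i| − n/2 | ≤ 2√(n ln n), h ≤ t, and the comparability graph of G_1,...,G_h (vertices are the sets, edges between comparable pairs under inclusion) is connected. Then the union ∪_{i=1}^h G_i has size at most n/2 + 4t√(n ln n). -/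
/-- If `G₁,…,G_h ⊆ [n]` each satisfy `||Gᵢ| − n/2| ≤ 2√(n ln n)`, `h ≤ t`, and their
comparability graph is connected, then `|⋃ Gᵢ| ≤ n/2 + 4t√(n ln n)`. -/
theorem stmt3 (n t h : ℕ) (ht : h ≤ t) (G : Fin h → Finset (Fin n))
    (hsize : ∀ i, |((G i).card : ℝ) - (n : ℝ) / 2| ≤ 2 * Real.sqrt (n * Real.log n))
    (hconn : (SimpleGraph.fromRel (fun i j : Fin h => G i ⊆ G j ∨ G j ⊆ G i)).Connected) :
    ((Finset.univ.biUnion G).card : ℝ) ≤ (n : ℝ) / 2 + 4 * t * Real.sqrt (n * Real.log n) := by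
  classical
  set Γ := SimpleGraph.fromRel (fun i j : Fin h => G i ⊆ G j ∨ G j ⊆ G i) with hΓ
  obtain ⟨z⟩ := hconn.nonempty
  set s := Real.sqrt (n * Real.log n) with hs
  have hs0 : 0 ≤ s := Real.sqrt_nonneg _
  have hpred : ∀ i : Fin h, i ≠ z → ∃ j, Γ.Adj i j ∧ Γ.dist z j < Γ.dist z i := by
    intro i hi
    obtain ⟨p, hp⟩ := (hconn z i).exists_walk_length_eq_dist
    have hlen : p.reverse.length = Γ.dist z i := by
      rw [SimpleGraph.Walk.length_reverse, hp]
    cases hq : p.reverse with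
    | nil => exact absurd rfl hi
    | cons hadj q =>
        refine ⟨_, hadj, ?_⟩
        have h1 : Γ.dist z _ ≤ q.reverse.length := SimpleGraph.dist_le _
        rw [SimpleGraph.Walk.length_reverse] at h1
        have h2 : q.length + 1 = Γ.dist z i := by
          rw [← hlen, hq, SimpleGraph.Walk.length_cons]
        omega
  have hpred' : ∀ i : Fin h, ∃ j, i ≠ z → Γ.Adj i j ∧ Γ.dist z j < Γ.dist z i := by
    intro i
    by_cases hi : i = z
    · exact ⟨z, fun h => absurd hi h⟩
    · obtain ⟨j, hj⟩ := hpred i hi; exact ⟨j, fun _ => hj⟩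
  choose pred hP using hpred'
  set U : Finset (Fin n) :=
    G z ∪ (Finset.univ.erase z).biUnion (fun j => G j \ G (pred j)) with hU
  have key : ∀ d : ℕ, ∀ i : Fin h, Γ.dist z i = d → G i ⊆ U := by
    intro d
    induction d using Nat.strong_induction_on with
    | _ d IH =>
      intro i hd
      by_cases hi : i = z
      · subst hi; exact Finset.subset_union_left
      · obtain ⟨hadj, hlt⟩ := hP i hi
        intro x hx
        by_cases hxp : x ∈ G (pred i)
        · exact IH (Γ.dist z (pred i)) (hd ▸ hlt) (pred i) rfl hxp
        · exact Finset.mem_union_right _ (Finset.mem_biUnion.2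
            ⟨i, Finset.mem_erase.2 ⟨hi, Finset.mem_univ i⟩,
              Finset.mem_sdiff.2 ⟨hx, hxp⟩⟩)
  have hsub : Finset.univ.biUnion G ⊆ U :=
    Finset.biUnion_subset.2 fun i _ => key _ i rfl
  have hcardU : (U.card : ℝ) ≤ ((G z).card : ℝ) +
      ∑ j ∈ Finset.univ.erase z, ((G j \ G (pred j)).card : ℝ) := by
    have h1 : U.card ≤ (G z).card +
        ∑ j ∈ Finset.univ.erase z, (G j \ G (pred j)).card :=
      le_trans (Finset.card_union_le _ _)
        (by gcongr; exact Finset.card_biUnion_le)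
    calc (U.card : ℝ) ≤ _ := Nat.cast_le.2 h1
    _ = _ := by push_cast; ring
  have hterm : ∀ j ∈ Finset.univ.erase z, ((G j \ G (pred j)).card : ℝ) ≤ 4 * s := by
    intro j hj
    have hjz : j ≠ z := (Finset.mem_erase.1 hj).1
    obtain ⟨hadj, -⟩ := hP j hjz
    rw [hΓ, SimpleGraph.fromRel_adj] at hadj
    have hc' : G j ⊆ G (pred j) ∨ G (pred j) ⊆ G j := by tauto
    rcases hc' with hc | hc
    · have : G j \ G (pred j) = ∅ := Finset.sdiff_eq_empty_iff_subset.2 hc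
      rw [this, Finset.card_empty]; simpa using mul_nonneg (by norm_num : (0:ℝ) ≤ 4) hs0
    · have hle := Finset.card_sdiff_of_subset hc
      have h1 := abs_le.1 (hsize j)
      have h2 := abs_le.1 (hsize (pred j))
      have hcard : ((G j \ G (pred j)).card : ℝ)
          = ((G j).card : ℝ) - ((G (pred j)).card : ℝ) := by
        rw [hle]; push_cast [Finset.card_le_card hc]; ring
      rw [hcard]; linarith [h1.2, h2.1]
  have hsum : ∑ j ∈ Finset.univ.erase z, ((G j \ G (pred j)).card : ℝ)
      ≤ (Finset.univ.erase z).card • (4 * s) := Finset.sum_le_card_nsmul _ _ _ hterm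
  have hh1 : 1 ≤ h := Fin.pos z
  have hcarde : ((Finset.univ.erase z).card : ℝ) = (h : ℝ) - 1 := by
    rw [Finset.card_erase_of_mem (Finset.mem_univ z), Finset.card_univ, Fintype.card_fin,
      Nat.cast_sub hh1, Nat.cast_one]
  have ht' : (h : ℝ) ≤ t := Nat.cast_le.2 ht
  have h1 : (1:ℝ) ≤ h := by exact_mod_cast hh1
  have hGz := (abs_le.1 (hsize z)).2
  have hmain : ((Finset.univ.biUnion G).card : ℝ) ≤ (U.card : ℝ) :=
    Nat.cast_le.2 (Finset.card_le_card hsub)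
  have hsum' : ∑ j ∈ Finset.univ.erase z, ((G j \ G (pred j)).card : ℝ)
      ≤ ((h:ℝ) - 1) * (4 * s) := by
    rw [nsmul_eq_mul, hcarde] at hsum; exact hsum
  calc ((Finset.univ.biUnion G).card : ℝ) ≤ (U.card : ℝ) := hmain
    _ ≤ ((G z).card : ℝ) + ∑ j ∈ Finset.univ.erase z, ((G j \ G (pred j)).card : ℝ) := hcardU
    _ ≤ ((n:ℝ)/2 + 2 * s) + ((h:ℝ) - 1) * (4 * s) := by linarith
    _ ≤ (n : ℝ) / 2 + 4 * t * s := by nlinarith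
end

section
/- Every finite poset P of height h is a strong subposet of an h-saturated finite poset P'; that is, there exists a finite poset P' of height h in which every maximal chain has exactly h elements, together with an injective map f : P → P' such that p ≤ q in P if and only if f(p) ≤ f(q) in P'. -/
section Aux

variable {α : Type*}

/-- In a finite nonempty chain there is a greatest element. -/
lemma chain_greatest {r : α → α → Prop} (htr : Transitive r) (s : Finset α)
    (hc : IsChain r (↑s : Set α)) (hne : s.Nonempty) :
    ∃ a ∈ s, ∀ b ∈ s, b ≠ a → r b a := by
  classical
  induction s using Finset.induction_on with
  | empty => exact absurd hne (by simp)
  | @insert x t hx ih =>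
    rcases t.eq_empty_or_nonempty with rfl | htne
    · exact ⟨x, by simp, by simp⟩
    · have hts : (↑t : Set α) ⊆ ↑(insert x t) := by
        intro y hy; simp only [Finset.coe_insert, Set.mem_insert_iff]
        exact Or.inr hy
      obtain ⟨a, ha, hga⟩ := ih (IsChain.mono hts hc) htne
      have hxa : x ≠ a := fun e => hx (e ▸ ha)
      have hcomp : r x a ∨ r a x := by
        refine hc ?_ ?_ hxa
        · simp
        · simp [Finset.mem_coe.mp ha]
      rcases hcomp with hra | hra
      · refine ⟨a, Finset.mem_insert_of_mem ha, ?_⟩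
        intro b hb hba
        rcases Finset.mem_insert.mp hb with rfl | hb
        · exact hra
        · exact hga b hb hba
      · refine ⟨x, Finset.mem_insert_self x t, ?_⟩
        intro b hb hbx
        rcases Finset.mem_insert.mp hb with rfl | hb
        · exact absurd rfl hbx
        · by_cases hba : b = a
          · exact hba ▸ hra
          · exact htr (hga b hb hba) hra

/-- In a finite nonempty chain there is a least element. -/
lemma chain_least {r : α → α → Prop} (htr : Transitive r) (s : Finset α)
    (hc : IsChain r (↑s : Set α)) (hne : s.Nonempty) :
    ∃ a ∈ s, ∀ b ∈ s, b ≠ a → r a b := by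
  have htr' : Transitive (flip r) := fun a b c hab hbc => htr hbc hab
  have hc' : IsChain (flip r) (↑s : Set α) := fun x hx y hy hne => (hc hx hy hne).symm
  exact chain_greatest htr' s hc' hne

end Aux

section Main

variable {P : Type*} [PartialOrder P] {h : ℕ}

/-- The order on the saturation `P × Fin h`. -/
def mle (h : ℕ) (x y : P × Fin h) : Prop :=
  (x.1 = y.1 ∧ x.2 ≤ y.2) ∨ (x.1 < y.1 ∧ x.2 < y.2)

lemma mle_refl (x : P × Fin h) : mle h x x := Or.inl ⟨rfl, le_refl _⟩

lemma mle_trans : Transitive (mle (P := P) h) := by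
  rintro x y z (⟨e1, l1⟩ | ⟨e1, l1⟩) (⟨e2, l2⟩ | ⟨e2, l2⟩)
  · exact Or.inl ⟨e1.trans e2, l1.trans l2⟩
  · exact Or.inr ⟨e1 ▸ e2, lt_of_le_of_lt l1 l2⟩
  · exact Or.inr ⟨e2 ▸ e1, lt_of_lt_of_le l1 l2⟩
  · exact Or.inr ⟨e1.trans e2, l1.trans l2⟩

lemma mle_snd_le {x y : P × Fin h} (hxy : mle h x y) : x.2 ≤ y.2 := by
  rcases hxy with ⟨_, l⟩ | ⟨_, l⟩
  · exact l
  · exact l.le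

lemma mle_antisymm {x y : P × Fin h} (hxy : mle h x y) (hyx : mle h y x) : x = y := by
  rcases hxy with ⟨e1, l1⟩ | ⟨e1, l1⟩
  · rcases hyx with ⟨_, l2⟩ | ⟨e2, _⟩
    · exact Prod.ext e1 (le_antisymm l1 l2)
    · exact absurd (e1 ▸ e2) (lt_irrefl _)
  · rcases hyx with ⟨e2, _⟩ | ⟨e2, _⟩
    · exact absurd (e2 ▸ e1) (lt_irrefl _)
    · exact absurd (e1.trans e2) (lt_irrefl _)

lemma mle_snd_lt {x y : P × Fin h} (hxy : mle h x y) (hne : x ≠ y) : x.2 < y.2 := by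
  rcases hxy with ⟨e1, l1⟩ | ⟨_, l1⟩
  · refine lt_of_le_of_ne l1 fun e2 => hne (Prod.ext e1 e2)
  · exact l1

/-- Any chain in the saturation has at most `h` elements. -/
lemma mle_chain_card_le (s : Finset (P × Fin h)) (hc : IsChain (mle h) (↑s : Set (P × Fin h))) :
    s.card ≤ h := by
  have hinj : Set.InjOn Prod.snd (↑s : Set (P × Fin h)) := by
    intro x hx y hy he
    by_contra hne
    rcases hc hx hy hne with hxy | hyx
    · exact absurd (he ▸ mle_snd_lt hxy hne) (lt_irrefl _)
    · exact absurd (he ▸ mle_snd_lt hyx (Ne.symm hne)) (lt_irrefl _)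
  calc s.card = (s.image Prod.snd).card := (Finset.card_image_of_injOn hinj).symm
    _ ≤ (Finset.univ : Finset (Fin h)).card := Finset.card_le_univ _
    _ = h := by simp

/-- A maximal chain in the saturation hits every level. -/
lemma mle_maximal_surj (hP : Nonempty P) (s : Finset (P × Fin h))
    (hc : IsChain (mle h) (↑s : Set (P × Fin h)))
    (hmax : ∀ u : Finset (P × Fin h), IsChain (mle h) (↑u : Set (P × Fin h)) → s ⊆ u → s = u)
    (j : Fin h) : ∃ x ∈ s, x.2 = j := by
  classical
  by_contra hno
  push_neg at hno
  -- find a candidate `c` with `c.2 = j` that can be inserted into `s`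
  have key : ∃ c : P × Fin h, c.2 = j ∧ ∀ y ∈ s, y ≠ c → mle h c y ∨ mle h y c := by
    rcases s.eq_empty_or_nonempty with rfl | hsne
    · exact ⟨(hP.some, j), rfl, by simp⟩
    · set A : Finset (P × Fin h) := s.filter (fun x => x.2 < j) with hA
      set B : Finset (P × Fin h) := s.filter (fun x => j < x.2) with hB
      have hcover : ∀ x ∈ s, x ∈ A ∨ x ∈ B := by
        intro x hx
        rcases lt_or_gt_of_ne (hno x hx) with hlt | hgt
        · exact Or.inl (Finset.mem_filter.mpr ⟨hx, hlt⟩)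
        · exact Or.inr (Finset.mem_filter.mpr ⟨hx, hgt⟩)
      rcases A.eq_empty_or_nonempty with hAe | hAne
      · -- all elements are above level j; take the least one
        have hBne : B.Nonempty := by
          obtain ⟨x, hx⟩ := hsne
          rcases hcover x hx with hxa | hxb
          · exact absurd hxa (by simp [hAe])
          · exact ⟨x, hxb⟩
        have hBc : IsChain (mle h) (↑B : Set (P × Fin h)) :=
          IsChain.mono (by exact_mod_cast Finset.filter_subset _ s) hc
        obtain ⟨b, hbB, hbl⟩ := chain_least mle_trans B hBc hBne
        have hjb : j < b.2 := (Finset.mem_filter.mp hbB).2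
        refine ⟨(b.1, j), rfl, ?_⟩
        intro y hy hne
        have hcb : mle h (b.1, j) b := Or.inl ⟨rfl, hjb.le⟩
        by_cases hyb : y = b
        · exact Or.inl (hyb ▸ hcb)
        · have hyB : y ∈ B := by
            rcases hcover y hy with hya | hyb'
            · exact absurd hya (by simp [hAe])
            · exact hyb'
          exact Or.inl (mle_trans hcb (hbl y hyB hyb))
      · -- take the greatest element of A
        have hAc : IsChain (mle h) (↑A : Set (P × Fin h)) :=
          IsChain.mono (by exact_mod_cast Finset.filter_subset _ s) hc
        obtain ⟨a, haA, hag⟩ := chain_greatest mle_trans A hAc hAne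
        have haj : a.2 < j := (Finset.mem_filter.mp haA).2
        have haS : a ∈ s := (Finset.mem_filter.mp haA).1
        refine ⟨(a.1, j), rfl, ?_⟩
        intro y hy hne
        have hac : mle h a (a.1, j) := Or.inl ⟨rfl, haj.le⟩
        rcases hcover y hy with hyA | hyB
        · -- y ≤ a ≤ c
          by_cases hya : y = a
          · exact Or.inr (hya ▸ hac)
          · exact Or.inr (mle_trans (hag y hyA hya) hac)
        · -- c ≤ y , using a ≤ y
          have hjy : j < y.2 := (Finset.mem_filter.mp hyB).2
          have hay : a ≠ y := by
            intro e; exact absurd (e ▸ haj) (by simp [not_lt, hjy.le])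
          have hcay : mle h a y ∨ mle h y a :=
            hc (Finset.mem_coe.mpr haS) (Finset.mem_coe.mpr hy) hay
          have hmay : mle h a y := by
            rcases hcay with hg | hg
            · exact hg
            · exact absurd (mle_snd_le hg) (not_le.mpr (haj.trans hjy))
          rcases hmay with ⟨e1, _⟩ | ⟨l1, _⟩
          · exact Or.inl (Or.inl ⟨e1, hjy.le⟩)
          · exact Or.inl (Or.inr ⟨l1, hjy⟩)
  obtain ⟨c, hcj, hcomp⟩ := key
  have hchain : IsChain (mle h) (↑(insert c s) : Set (P × Fin h)) := by
    rw [Finset.coe_insert]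
    exact IsChain.insert hc fun b hb hne => hcomp b (Finset.mem_coe.mp hb) (Ne.symm hne)
  have := hmax (insert c s) hchain (Finset.subset_insert _ _)
  have hcs : c ∈ s := this ▸ Finset.mem_insert_self c s
  exact hno c hcs hcj

/-- A maximal chain in the saturation has exactly `h` elements. -/
lemma mle_maximal_card (hP : 0 < h → Nonempty P) (s : Finset (P × Fin h))
    (hc : IsChain (mle h) (↑s : Set (P × Fin h)))
    (hmax : ∀ u : Finset (P × Fin h), IsChain (mle h) (↑u : Set (P × Fin h)) → s ⊆ u → s = u) :
    s.card = h := by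
  have hinj : Set.InjOn Prod.snd (↑s : Set (P × Fin h)) := by
    intro x hx y hy he
    by_contra hne
    rcases hc hx hy hne with hxy | hyx
    · exact absurd (he ▸ mle_snd_lt hxy hne) (lt_irrefl _)
    · exact absurd (he ▸ mle_snd_lt hyx (Ne.symm hne)) (lt_irrefl _)
  have himg : s.image Prod.snd = (Finset.univ : Finset (Fin h)) := by
    apply Finset.eq_univ_iff_forall.mpr
    intro j
    obtain ⟨x, hx, hx2⟩ := mle_maximal_surj (hP j.pos) s hc hmax j
    exact Finset.mem_image.mpr ⟨x, hx, hx2⟩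
  calc s.card = (s.image Prod.snd).card := (Finset.card_image_of_injOn hinj).symm
    _ = h := by rw [himg]; simp

/-- Rank function: the (finite) height of an element. -/
noncomputable def rnk (p : P) : ℕ := (Order.height p).toNat

lemma height_lt_of_ub (hub : ∀ s : Finset P, IsChain (· ≤ ·) (↑s : Set P) → s.card ≤ h)
    (p : P) : Order.height p < (h : ℕ∞) := by
  classical
  have hseries : ∀ q : LTSeries P, q.length + 1 ≤ h := by
    intro q
    have hinj : Function.Injective q.toFun := q.strictMono.injective
    have hchain : IsChain (· ≤ ·) (↑(Finset.univ.image q.toFun) : Set P) := by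
      intro x hx y hy hne
      simp only [Finset.coe_image, Set.mem_image] at hx hy
      obtain ⟨i, _, rfl⟩ := hx
      obtain ⟨k, _, rfl⟩ := hy
      have hik : i ≠ k := fun e => hne (e ▸ rfl)
      rcases lt_or_gt_of_ne hik with hlt | hgt
      · exact Or.inl (q.strictMono hlt).le
      · exact Or.inr (q.strictMono hgt).le
    have := hub (Finset.univ.image q.toFun) hchain
    rwa [Finset.card_image_of_injective _ hinj, Finset.card_univ, Fintype.card_fin] at this
  have hpos : 1 ≤ h := by
    have := hseries (RelSeries.singleton _ p)
    simpa using this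
  have hle : Order.height p ≤ ((h - 1 : ℕ) : ℕ∞) := by
    apply Order.height_le
    intro q _
    exact_mod_cast Nat.le_sub_one_of_lt (Nat.lt_of_succ_le (hseries q))
  exact lt_of_le_of_lt hle (by exact_mod_cast Nat.sub_lt hpos one_pos)

lemma enat_toNat_lt {a : ℕ∞} {k : ℕ} (hlt : a < (k : ℕ∞)) : a.toNat < k := by
  lift a to ℕ using ne_top_of_lt hlt
  simpa using (by exact_mod_cast hlt : a < k)

lemma rnk_lt (hub : ∀ s : Finset P, IsChain (· ≤ ·) (↑s : Set P) → s.card ≤ h)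
    (p : P) : rnk p < h :=
  enat_toNat_lt (height_lt_of_ub hub p)

lemma rnk_strictmono (hub : ∀ s : Finset P, IsChain (· ≤ ·) (↑s : Set P) → s.card ≤ h)
    {p q : P} (hpq : p < q) : rnk p < rnk q := by
  have h1 := height_lt_of_ub hub p
  have h2 := height_lt_of_ub hub q
  have hlt := Order.height_strictMono hpq (lt_of_lt_of_le h1 le_top)
  unfold rnk
  lift Order.height p to ℕ using ne_top_of_lt h1 with n hn
  lift Order.height q to ℕ using ne_top_of_lt h2 with k hk
  simpa using (by exact_mod_cast hlt : n < k)

end Main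

/-- Every finite poset of height `h` is a strong (induced) subposet of an `h`-saturated
finite poset: a poset of height `h` in which every maximal chain has exactly `h` elements. -/
theorem stmt4 (P : Type*) [Fintype P] [PartialOrder P] (h : ℕ)
    (hh : IsGreatest {k | ∃ s : Finset P, s.card = k ∧ IsChain (· ≤ ·) (↑s : Set P)} h) :
    ∃ (m : ℕ) (le : Fin m → Fin m → Prop) (_ : IsPartialOrder (Fin m) le)
      (f : P → Fin m),
      Function.Injective f ∧
      (∀ p q : P, p ≤ q ↔ le (f p) (f q)) ∧
      IsGreatest {k | ∃ s : Finset (Fin m), s.card = k ∧ IsChain le (↑s : Set (Fin m))} h ∧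
      ∀ s : Finset (Fin m), IsChain le (↑s : Set (Fin m)) →
        (∀ u : Finset (Fin m), IsChain le (↑u : Set (Fin m)) → s ⊆ u → s = u) →
        s.card = h := by
  classical
  have hub : ∀ s : Finset P, IsChain (· ≤ ·) (↑s : Set P) → s.card ≤ h :=
    fun s hchain => hh.2 ⟨s, rfl, hchain⟩
  have hP : 0 < h → Nonempty P := by
    intro hpos
    obtain ⟨s0, hcard, _⟩ := hh.1
    obtain ⟨x, _⟩ := Finset.card_pos.mp (hcard ▸ hpos)
    exact ⟨x⟩
  set m := Fintype.card (P × Fin h) with hm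
  set e := Fintype.equivFin (P × Fin h) with he
  set le : Fin m → Fin m → Prop := fun x y => mle h (e.symm x) (e.symm y) with hle
  refine ⟨m, le, ?_, fun p => e (p, ⟨rnk p, rnk_lt hub p⟩), ?_, ?_, ?_, ?_⟩
  · -- partial order
    exact
      { refl := fun x => mle_refl _
        trans := fun x y z hxy hyz => mle_trans hxy hyz
        antisymm := fun x y hxy hyx => by
          have h1 := mle_antisymm hxy hyx
          have h2 := congrArg e h1
          simpa using h2 }
  · -- injective
    intro p q hpq
    have := congrArg e.symm hpq
    simp only [Equiv.symm_apply_apply] at this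
    exact congrArg Prod.fst this
  · -- induced
    intro p q
    simp only [hle, Equiv.symm_apply_apply]
    constructor
    · intro hpq
      rcases lt_or_eq_of_le hpq with hlt | rfl
      · exact Or.inr ⟨hlt, by exact_mod_cast rnk_strictmono hub hlt⟩
      · exact mle_refl _
    · rintro (⟨e1, _⟩ | ⟨l1, _⟩)
      · exact le_of_eq e1
      · exact l1.le
  · -- IsGreatest
    constructor
    · -- membership : a chain of size h
      rcases Nat.eq_zero_or_pos h with rfl | hpos
      · exact ⟨∅, rfl, by simp⟩
      · obtain ⟨p⟩ := hP hpos
        refine ⟨Finset.univ.image (fun i : Fin h => e (p, i)), ?_, ?_⟩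
        · rw [Finset.card_image_of_injective _ (fun i k hik => by
            simpa using congrArg Prod.snd (e.injective hik)), Finset.card_univ,
            Fintype.card_fin]
        · intro x hx y hy hne
          simp only [Finset.coe_image, Set.mem_image] at hx hy
          obtain ⟨i, _, rfl⟩ := hx
          obtain ⟨k, _, rfl⟩ := hy
          rcases le_total i k with hik' | hik'
          · refine Or.inl ?_
            show mle h (e.symm (e (p, i))) (e.symm (e (p, k)))
            simp only [Equiv.symm_apply_apply]
            exact Or.inl ⟨rfl, hik'⟩
          · refine Or.inr ?_
            show mle h (e.symm (e (p, k))) (e.symm (e (p, i)))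
            simp only [Equiv.symm_apply_apply]
            exact Or.inl ⟨rfl, hik'⟩
    · -- upper bound
      rintro k ⟨s, rfl, hchain⟩
      have hchain' : IsChain (mle h) (↑(s.image e.symm) : Set (P × Fin h)) := by
        intro x hx y hy hne
        simp only [Finset.coe_image, Set.mem_image] at hx hy
        obtain ⟨a, ha, rfl⟩ := hx
        obtain ⟨b, hb, rfl⟩ := hy
        have hab : a ≠ b := fun hab => hne (hab ▸ rfl)
        exact hchain (Finset.mem_coe.mpr ha) (Finset.mem_coe.mpr hb) hab
      have := mle_chain_card_le _ hchain'
      rwa [Finset.card_image_of_injective _ e.symm.injective] at this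
  · -- saturation
    intro s hchain hmax
    set t : Finset (P × Fin h) := s.image e.symm with ht
    have htc : IsChain (mle h) (↑t : Set (P × Fin h)) := by
      intro x hx y hy hne
      simp only [ht, Finset.coe_image, Set.mem_image] at hx hy
      obtain ⟨a, ha, rfl⟩ := hx
      obtain ⟨b, hb, rfl⟩ := hy
      have hab : a ≠ b := fun hab => hne (hab ▸ rfl)
      exact hchain (Finset.mem_coe.mpr ha) (Finset.mem_coe.mpr hb) hab
    have htmax : ∀ u : Finset (P × Fin h), IsChain (mle h) (↑u : Set (P × Fin h)) →
        t ⊆ u → t = u := by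
      intro u huc htu
      have hu'c : IsChain le (↑(u.image e) : Set (Fin m)) := by
        intro x hx y hy hne
        simp only [Finset.coe_image, Set.mem_image] at hx hy
        obtain ⟨a, ha, rfl⟩ := hx
        obtain ⟨b, hb, rfl⟩ := hy
        have hab : a ≠ b := fun hab => hne (hab ▸ rfl)
        have := huc (Finset.mem_coe.mpr ha) (Finset.mem_coe.mpr hb) hab
        simpa only [hle, Equiv.symm_apply_apply] using this
      have hsu : s ⊆ u.image e := by
        intro x hx
        have : e.symm x ∈ t := Finset.mem_image_of_mem _ hx
        have := htu this
        have := Finset.mem_image_of_mem e this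
        simpa using this
      have hse := hmax (u.image e) hu'c hsu
      rw [ht, hse, Finset.image_image]
      have : (e.symm ∘ e) = id := funext fun x => e.symm_apply_apply x
      rw [this, Finset.image_id]
    have hcard := mle_maximal_card hP t htc htmax
    rwa [ht, Finset.card_image_of_injective _ e.symm.injective] at hcard
end

section
/- If a coloring c of 2^[n] uses strictly more than La(n, P⁻(P)) + 2 colors, where P⁻(P) = { P \ {m} : m is a maximal or minimal element of P }, then 2^[n] contains a rainbow weak copy of P. Equivalently, ar(n,P) ≤ 2 + La(n, P⁻(P)). -/
/-- `G` is a weak copy of the poset `P` in `2^[n]`. -/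
def IsWeakCopy {n : ℕ} (P : Type*) [PartialOrder P] [Fintype P]
    (G : Finset (Finset (Fin n))) : Prop :=
  ∃ f : P → Finset (Fin n), Function.Injective f ∧ Finset.univ.image f = G ∧
    ∀ p q : P, p ≤ q → f p ⊆ f q

/-- If a coloring of `2^[n]` uses more than `La(n, P⁻(P)) + 2` colors, then there is a
rainbow weak copy of `P`.  Here `L` plays the role of `La(n, P⁻(P))`: every family with
more than `L` sets contains a weak copy of `P \ {m}` for some maximal or minimal `m`. -/
theorem stmt6 (n : ℕ) (P : Type*) [PartialOrder P] [Fintype P] [DecidableEq P] (L : ℕ)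
    (hL : ∀ F : Finset (Finset (Fin n)), L < F.card →
      ∃ m : P, ((∀ q, m ≤ q → q = m) ∨ (∀ q, q ≤ m → q = m)) ∧
        ∃ G ⊆ F, IsWeakCopy {p : P // p ≠ m} G)
    (c : Finset (Fin n) → ℕ)
    (hc : L + 2 < (Finset.univ.image c).card) :
    ∃ G : Finset (Finset (Fin n)), IsWeakCopy P G ∧ Set.InjOn c (↑G : Set (Finset (Fin n))) := by
  classical
  -- representative of each color
  set g : ℕ → Finset (Fin n) := fun k => if h : ∃ A, c A = k then h.choose else ∅ with hg
  have hgc : ∀ k ∈ Finset.univ.image c, c (g k) = k := by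
    intro k hk
    simp only [Finset.mem_image] at hk
    obtain ⟨A, -, hA⟩ := hk
    have h : ∃ A, c A = k := ⟨A, hA⟩
    simp only [hg, dif_pos h]
    exact h.choose_spec
  set S : Finset ℕ := (Finset.univ.image c) \ {c ∅, c Finset.univ} with hS
  have hSsub : S ⊆ Finset.univ.image c := Finset.sdiff_subset
  have hScard : L < S.card := by
    have h1 : (Finset.univ.image c).card ≤ S.card + ({c ∅, c Finset.univ} : Finset ℕ).card :=
      Finset.card_le_card_sdiff_add_card
    have h2 : ({c ∅, c Finset.univ} : Finset ℕ).card ≤ 2 := by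
      apply le_trans (Finset.card_insert_le _ _); simp
    omega
  set F : Finset (Finset (Fin n)) := S.image g with hF
  have hcF : ∀ A ∈ F, c A ∈ S := by
    intro A hA
    simp only [hF, Finset.mem_image] at hA
    obtain ⟨k, hk, rfl⟩ := hA
    rw [hgc k (hSsub hk)]; exact hk
  have hcne : ∀ A ∈ F, c A ≠ c ∅ ∧ c A ≠ c Finset.univ := by
    intro A hA
    have := hcF A hA
    simp only [hS, Finset.mem_sdiff, Finset.mem_insert, Finset.mem_singleton] at this
    exact ⟨fun h => this.2 (Or.inl h), fun h => this.2 (Or.inr h)⟩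
  have hinjF : Set.InjOn c ↑F := by
    intro A hA B hB hAB
    simp only [Finset.coe_image, Set.mem_image, Finset.mem_coe, hF] at hA hB
    obtain ⟨k, hk, rfl⟩ := hA
    obtain ⟨k', hk', rfl⟩ := hB
    rw [hgc k (hSsub hk), hgc k' (hSsub hk')] at hAB
    rw [hAB]
  have hFcard : L < F.card := by
    have : F.card = S.card := Finset.card_image_of_injOn (by
      intro k hk k' hk' h
      have := hgc k (hSsub hk)
      rw [h, hgc k' (hSsub hk')] at this
      exact this.symm)
    omega
  obtain ⟨m, hm, G, hGF, f, hfinj, hfim, hfmono⟩ := hL F hFcard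
  have hmemG : ∀ A ∈ G, A ∈ F := fun A hA => hGF hA
  have hfmemG : ∀ s : {p : P // p ≠ m}, f s ∈ G := by
    intro s
    rw [← hfim]
    exact Finset.mem_image_of_mem f (Finset.mem_univ s)
  rcases hm with hmax | hmin
  · -- m maximal: extend by Finset.univ
    have hUG : (Finset.univ : Finset (Fin n)) ∉ G := by
      intro h
      exact (hcne _ (hmemG _ h)).2 rfl
    set f' : P → Finset (Fin n) := fun p =>
      if h : p = m then Finset.univ else f ⟨p, h⟩ with hf'
    have hf'm : f' m = Finset.univ := by simp [hf']
    have hf'ne : ∀ (p : P) (h : p ≠ m), f' p = f ⟨p, h⟩ := by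
      intro p h; simp [hf', h]
    refine ⟨insert Finset.univ G, ⟨f', ?_, ?_, ?_⟩, ?_⟩
    · intro p q hpq
      by_cases hp : p = m <;> by_cases hq : q = m
      · rw [hp, hq]
      · rw [hp, hf'm, hf'ne q hq] at hpq
        exact absurd (hpq ▸ hfmemG ⟨q, hq⟩) hUG
      · rw [hq, hf'm, hf'ne p hp] at hpq
        exact absurd (hpq.symm ▸ hfmemG ⟨p, hp⟩) hUG
      · rw [hf'ne p hp, hf'ne q hq] at hpq
        have := hfinj hpq
        exact congrArg Subtype.val this
    · ext A
      simp only [Finset.mem_image, Finset.mem_univ, true_and, Finset.mem_insert]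
      constructor
      · rintro ⟨p, rfl⟩
        by_cases hp : p = m
        · left; rw [hp, hf'm]
        · right; rw [hf'ne p hp]; exact hfmemG _
      · rintro (rfl | hA)
        · exact ⟨m, hf'm⟩
        · rw [← hfim] at hA
          simp only [Finset.mem_image, Finset.mem_univ, true_and] at hA
          obtain ⟨s, rfl⟩ := hA
          exact ⟨s.1, by rw [hf'ne s.1 s.2]⟩
    · intro p q hpq
      by_cases hq : q = m
      · rw [hq, hf'm]; exact Finset.subset_univ _
      · have hp : p ≠ m := fun h => hq (hmax q (h ▸ hpq))
        rw [hf'ne p hp, hf'ne q hq]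
        exact hfmono ⟨p, hp⟩ ⟨q, hq⟩ hpq
    · intro A hA B hB hAB
      simp only [Finset.coe_insert, Set.mem_insert_iff, Finset.mem_coe] at hA hB
      rcases hA with rfl | hA <;> rcases hB with rfl | hB
      · rfl
      · exact absurd hAB.symm (hcne _ (hmemG _ hB)).2
      · exact absurd hAB (hcne _ (hmemG _ hA)).2
      · exact hinjF (hmemG _ hA) (hmemG _ hB) hAB
  · -- m minimal: extend by ∅
    have hUG : (∅ : Finset (Fin n)) ∉ G := by
      intro h
      exact (hcne _ (hmemG _ h)).1 rfl
    set f' : P → Finset (Fin n) := fun p =>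
      if h : p = m then ∅ else f ⟨p, h⟩ with hf'
    have hf'm : f' m = ∅ := by simp [hf']
    have hf'ne : ∀ (p : P) (h : p ≠ m), f' p = f ⟨p, h⟩ := by
      intro p h; simp [hf', h]
    refine ⟨insert ∅ G, ⟨f', ?_, ?_, ?_⟩, ?_⟩
    · intro p q hpq
      by_cases hp : p = m <;> by_cases hq : q = m
      · rw [hp, hq]
      · rw [hp, hf'm, hf'ne q hq] at hpq
        exact absurd (hpq ▸ hfmemG ⟨q, hq⟩) hUG
      · rw [hq, hf'm, hf'ne p hp] at hpq
        exact absurd (hpq.symm ▸ hfmemG ⟨p, hp⟩) hUG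
      · rw [hf'ne p hp, hf'ne q hq] at hpq
        have := hfinj hpq
        exact congrArg Subtype.val this
    · ext A
      simp only [Finset.mem_image, Finset.mem_univ, true_and, Finset.mem_insert]
      constructor
      · rintro ⟨p, rfl⟩
        by_cases hp : p = m
        · left; rw [hp, hf'm]
        · right; rw [hf'ne p hp]; exact hfmemG _
      · rintro (rfl | hA)
        · exact ⟨m, hf'm⟩
        · rw [← hfim] at hA
          simp only [Finset.mem_image, Finset.mem_univ, true_and] at hA
          obtain ⟨s, rfl⟩ := hA
          exact ⟨s.1, by rw [hf'ne s.1 s.2]⟩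
    · intro p q hpq
      by_cases hp : p = m
      · rw [hp, hf'm]; exact Finset.empty_subset _
      · have hq : q ≠ m := fun h => hp (hmin p (h ▸ hpq))
        rw [hf'ne p hp, hf'ne q hq]
        exact hfmono ⟨p, hp⟩ ⟨q, hq⟩ hpq
    · intro A hA B hB hAB
      simp only [Finset.coe_insert, Set.mem_insert_iff, Finset.mem_coe] at hA hB
      rcases hA with rfl | hA <;> rcases hB with rfl | hB
      · rfl
      · exact absurd hAB.symm (hcne _ (hmemG _ hB)).1
      · exact absurd hAB (hcne _ (hmemG _ hA)).1
      · exact hinjF (hmemG _ hA) (hmemG _ hB) hAB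
end

section
/- If a finite poset P has a largest element m, then ar*(n,P) ≤ 1 + La*(n, P \ {m}), where ar*(n,P) is the maximum number of colors in a coloring of 2^[n] with no rainbow strong copy of P, and La*(n,Q) is the maximum size of a strong-Q-free family in 2^[n]. -/
/-- `G` is a strong copy of the poset `P` in `2^[n]`. -/
def IsStrongCopy {n : ℕ} (P : Type*) [PartialOrder P] [Fintype P]
    (G : Finset (Finset (Fin n))) : Prop :=
  ∃ f : P → Finset (Fin n), Function.Injective f ∧ Finset.univ.image f = G ∧
    ∀ p q : P, p ≤ q ↔ f p ⊆ f q

/-- If `P` has a largest element `m`, then `ar*(n,P) ≤ 1 + La*(n, P \ {m})`: here `L`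
plays the role of `La*(n, P \ {m})`, i.e. every family with more than `L` sets contains a
strong copy of `P \ {m}`; any coloring with more than `L + 1` colors admits a rainbow
strong copy of `P`. -/
theorem stmt7 (n : ℕ) (P : Type*) [PartialOrder P] [Fintype P] [DecidableEq P]
    (m : P) (hm : ∀ p, p ≤ m) (L : ℕ)
    (hL : ∀ F : Finset (Finset (Fin n)), L < F.card →
      ∃ G ⊆ F, IsStrongCopy {p : P // p ≠ m} G)
    (c : Finset (Fin n) → ℕ)
    (hc : L + 1 < (Finset.univ.image c).card) :
    ∃ G : Finset (Finset (Fin n)), IsStrongCopy P G ∧ Set.InjOn c (↑G : Set (Finset (Fin n))) := by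
  classical
  set U : Finset (Fin n) := Finset.univ with hU
  -- colors other than the color of the full set
  set S : Finset ℕ := (Finset.univ.image c).erase (c U) with hS
  have hcU : c U ∈ Finset.univ.image c := Finset.mem_image_of_mem c (Finset.mem_univ U)
  have hScard : L < S.card := by
    rw [hS, Finset.card_erase_of_mem hcU]
    omega
  -- choose a representative for each color
  set g : ℕ → Finset (Fin n) := fun k => if h : ∃ s, c s = k then h.choose else ∅ with hg
  have hgc : ∀ k ∈ S, c (g k) = k := by
    intro k hk
    have hk' : k ∈ Finset.univ.image c := Finset.mem_of_mem_erase hk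
    obtain ⟨s, -, hs⟩ := Finset.mem_image.1 hk'
    have h : ∃ s, c s = k := ⟨s, hs⟩
    simp only [hg, dif_pos h]
    exact h.choose_spec
  set F : Finset (Finset (Fin n)) := S.image g with hF
  have hginj : Set.InjOn g ↑S := by
    intro a ha b hb hab
    rw [← hgc a ha, ← hgc b hb, hab]
  have hFcard : L < F.card := by
    rw [hF, Finset.card_image_of_injOn hginj]; exact hScard
  obtain ⟨G, hGF, f0, hf0inj, hf0img, hf0ord⟩ := hL F hFcard
  -- properties of elements of G
  have hGcol : ∀ x ∈ G, c x ∈ S := by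
    intro x hx
    obtain ⟨k, hk, rfl⟩ := Finset.mem_image.1 (hGF hx)
    rw [hgc k hk]; exact hk
  have hGne : ∀ x ∈ G, x ≠ U := by
    intro x hx hxU
    have := hGcol x hx
    rw [hxU] at this
    exact (Finset.ne_of_mem_erase this) rfl
  have hGinj : Set.InjOn c ↑G := by
    intro a ha b hb hab
    obtain ⟨ka, hka, rfl⟩ := Finset.mem_image.1 (hGF ha)
    obtain ⟨kb, hkb, rfl⟩ := Finset.mem_image.1 (hGF hb)
    rw [hgc ka hka, hgc kb hkb] at hab
    rw [hab]
  -- the combined map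
  set f : P → Finset (Fin n) := fun p => if h : p = m then U else f0 ⟨p, h⟩ with hf
  have hfm : f m = U := by simp [hf]
  have hfne : ∀ (p : P) (h : p ≠ m), f p = f0 ⟨p, h⟩ := by
    intro p h; simp [hf, h]
  have hf0G : ∀ q : {p : P // p ≠ m}, f0 q ∈ G := by
    intro q
    rw [← hf0img]
    exact Finset.mem_image_of_mem f0 (Finset.mem_univ q)
  refine ⟨insert U G, ⟨f, ?_, ?_, ?_⟩, ?_⟩
  · -- injectivity
    intro p q hpq
    by_cases hp : p = m <;> by_cases hq : q = m
    · rw [hp, hq]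
    · rw [hp, hfm, hfne q hq] at hpq
      exact absurd hpq.symm (hGne _ (hf0G ⟨q, hq⟩))
    · rw [hq, hfm, hfne p hp] at hpq
      exact absurd hpq (hGne _ (hf0G ⟨p, hp⟩))
    · rw [hfne p hp, hfne q hq] at hpq
      exact congrArg Subtype.val (hf0inj hpq)
  · -- image
    apply Finset.ext
    intro x
    simp only [Finset.mem_image, Finset.mem_insert, Finset.mem_univ, true_and]
    constructor
    · rintro ⟨p, rfl⟩
      by_cases hp : p = m
      · left; rw [hp, hfm]
      · right; rw [hfne p hp]; exact hf0G ⟨p, hp⟩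
    · rintro (rfl | hx)
      · exact ⟨m, hfm⟩
      · rw [← hf0img] at hx
        obtain ⟨q, -, rfl⟩ := Finset.mem_image.1 hx
        exact ⟨q.1, hfne q.1 q.2⟩
  · -- order-embedding
    intro p q
    by_cases hq : q = m
    · subst hq
      simp only [hfm]
      constructor
      · intro _; exact Finset.subset_univ _
      · intro _; exact hm p
    · by_cases hp : p = m
      · subst hp
        rw [hfm, hfne q hq]
        constructor
        · intro h; exact absurd (le_antisymm (hm q) h) hq
        · intro h
          exact absurd (Finset.univ_subset_iff.1 h)
            (hGne _ (hf0G ⟨q, hq⟩))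
      · rw [hfne p hp, hfne q hq]
        exact hf0ord ⟨p, hp⟩ ⟨q, hq⟩
  · -- rainbow
    intro a ha b hb hab
    simp only [Finset.coe_insert, Set.mem_insert_iff, Finset.mem_coe] at ha hb
    rcases ha with rfl | ha <;> rcases hb with rfl | hb
    · rfl
    · exact absurd hab.symm (Finset.ne_of_mem_erase (hGcol b hb))
    · exact absurd hab (Finset.ne_of_mem_erase (hGcol a ha))
    · exact hGinj ha hb hab
end

section
/- Let P be a finite poset and F ⊆ 2^[n] a convex family containing, for every maximal or minimal element m of P, no weak copy of P \ {m}. Color each set of F with its own distinct color and all sets of 2^[n] \ F with one additional common color. Then this coloring of 2^[n] admits no rainbow weak copy of P. In particular, ar(n,P) ≥ 1 + La_con(n, P⁻(P)). -/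
theorem exists_isMax_or_isMin_forall_ne_mem {P α : Type*} [PartialOrder P] [Finite P]
    [Nonempty P] [Preorder α] {f : P → α} (hf : Monotone f) {s : Set α} (hs : s.OrdConnected)
    (hout : ∀ p q, f p ∉ s → f q ∉ s → p = q) :
    ∃ m, (IsMax m ∨ IsMin m) ∧ ∀ p ≠ m, f p ∈ s := by
  by_cases hall : ∀ p, f p ∈ s
  · obtain ⟨m, -, hm⟩ := Set.finite_univ.exists_maximal (Set.univ_nonempty (α := P))
    exact ⟨m, Or.inl fun q hq => hm (Set.mem_univ q) hq, fun p _ => hall p⟩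
  obtain ⟨m, hm⟩ := not_forall.1 hall
  have hrest : ∀ p ≠ m, f p ∈ s := fun p hp => by
    by_contra hp'
    exact hp (hout p m hp' hm)
  refine ⟨m, ?_, hrest⟩
  by_contra! h
  obtain ⟨q, hmq⟩ := not_isMax_iff.1 h.1
  obtain ⟨r, hrm⟩ := not_isMin_iff.1 h.2
  exact hm (hs.out (hrest r hrm.ne) (hrest q hmq.ne') ⟨hf hrm.le, hf hmq.le⟩)

theorem eq_of_injOn_ite_some_none {α : Type*} [DecidableEq α] {F : Finset α} {G : Set α}
    (h : Set.InjOn (fun A => if A ∈ F then some A else none) G) {A B : α} (hA : A ∈ G)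
    (hB : B ∈ G) (hAF : A ∉ F) (hBF : B ∉ F) : A = B :=
  h hA hB (by simp [hAF, hBF])

/-- If `F` is convex and contains no weak copy of `P \ {m}` for any maximal or minimal
`m`, then coloring the members of `F` with distinct colors and everything else with one
extra color yields no rainbow weak copy of `P`. -/
theorem stmt8 (n : ℕ) (P : Type*) [PartialOrder P] [Fintype P] [DecidableEq P] [Nonempty P]
    (F : Finset (Finset (Fin n)))
    (hconv : ∀ A B C : Finset (Fin n), A ∈ F → C ∈ F → A ⊆ B → B ⊆ C → B ∈ F)
    (hfree : ∀ m : P, ((∀ q, m ≤ q → q = m) ∨ (∀ q, q ≤ m → q = m)) →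
      ¬∃ G ⊆ F, IsWeakCopy {p : P // p ≠ m} G)
    (c : Finset (Fin n) → Option (Finset (Fin n)))
    (hc : c = fun A => if A ∈ F then some A else none) :
    ¬∃ G : Finset (Finset (Fin n)), IsWeakCopy P G ∧
      Set.InjOn c (↑G : Set (Finset (Fin n))) := by
  subst hc
  rintro ⟨-, ⟨f, hf, rfl, hmono⟩, hrainbow⟩
  have hord : (F : Set (Finset (Fin n))).OrdConnected :=
    ⟨fun A hA C hC B hB => hconv A B C hA hC hB.1 hB.2⟩
  have hout : ∀ p q, f p ∉ F → f q ∉ F → p = q := fun p q hp hq =>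
    hf (eq_of_injOn_ite_some_none hrainbow (by simp) (by simp) hp hq)
  obtain ⟨m, hm, hmF⟩ := exists_isMax_or_isMin_forall_ne_mem hmono hord hout
  refine hfree m (hm.imp (fun h q hq => (h hq).antisymm hq) (fun h q hq => hq.antisymm (h hq)))
    ⟨_, ?_, fun p => f p, hf.comp Subtype.val_injective, rfl, fun p q => hmono p q⟩
  simp only [Finset.subset_iff, Finset.mem_image, Finset.mem_univ, true_and,
    forall_exists_index, forall_apply_eq_imp_iff]
  exact fun p => hmF p p.2
end

section
/- For n ≥ 2k, any coloring of 2^[n] using strictly more than 3 + (k−2)(n−1) colors contains a rainbow antichain of k sets, i.e., k pairwise incomparable sets with pairwise distinct colors. Hence ar*(n, A_k) ≤ 3 + (k−2)(n−1). -/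
open Finset

/-- From a family whose image has at least `m` colors, pick `m` members with distinct colors. -/
lemma pick_distinct {α β : Type*} [DecidableEq α] [DecidableEq β] (c : α → β) (s : Finset α)
    (m : ℕ) (h : m ≤ (s.image c).card) :
    ∃ t, t ⊆ s ∧ t.card = m ∧ Set.InjOn c ↑t := by
  classical
  obtain ⟨u, hus, hu⟩ := Finset.exists_subset_card_eq h
  have hg : ∀ y ∈ u, ∃ a ∈ s, c a = y := fun y hy => Finset.mem_image.mp (hus hy)
  choose g hgs hgc using hg
  have hginj : Function.Injective (fun y : {y // y ∈ u} => g y.1 y.2) := by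
    intro y1 y2 hyy
    exact Subtype.ext (by rw [← hgc y1.1 y1.2, ← hgc y2.1 y2.2]; exact congrArg c hyy)
  refine ⟨u.attach.image (fun y => g y.1 y.2), ?_, ?_, ?_⟩
  · intro a ha
    simp only [Finset.mem_image, Finset.mem_attach, true_and, Subtype.exists] at ha
    obtain ⟨y, hy, rfl⟩ := ha
    exact hgs y hy
  · rw [Finset.card_image_of_injective _ hginj, Finset.card_attach, hu]
  · intro a ha b hb hab
    rw [Finset.mem_coe, Finset.mem_image] at ha hb
    obtain ⟨⟨y1, hy1⟩, -, rfl⟩ := ha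
    obtain ⟨⟨y2, hy2⟩, -, rfl⟩ := hb
    have : y1 = y2 := by rw [← hgc y1 hy1, ← hgc y2 hy2, hab]
    subst this; rfl

/-- Hitting-set lemma: given at most `s` nonempty subsets of `Fin n` with `s ≤ n`, there is a
set of size exactly `s` meeting all of them. -/
lemma hit {n : ℕ} (B : Finset (Finset (Fin n))) (s : ℕ) (hB : ∀ b ∈ B, b.Nonempty)
    (hm : B.card ≤ s) (hs : s ≤ n) :
    ∃ T : Finset (Fin n), T.card = s ∧ ∀ b ∈ B, ∃ x ∈ T, x ∈ b := by
  classical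
  choose f hf using hB
  set U := B.attach.image (fun b => f b.1 b.2) with hUdef
  have hU : U.card ≤ s := by
    refine le_trans (le_trans Finset.card_image_le ?_) hm
    simp
  obtain ⟨T, hUT, -, hT⟩ := Finset.exists_subsuperset_card_eq (Finset.subset_univ U) hU
    (by simpa using hs)
  exact ⟨T, hT, fun b hb => ⟨f b hb,
    hUT (Finset.mem_image.mpr ⟨⟨b, hb⟩, Finset.mem_attach _ _, rfl⟩), hf b hb⟩⟩

/-- For `n ≥ 2k`, any coloring of `2^[n]` with more than `3 + (k−2)(n−1)` colors contains
a rainbow antichain of `k` sets. -/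
theorem stmt9 (n k : ℕ) (hk : 2 ≤ k) (hn : 2 * k ≤ n) (c : Finset (Fin n) → ℕ)
    (hc : 3 + (k - 2) * (n - 1) < (Finset.univ.image c).card) :
    ∃ G : Finset (Finset (Fin n)), G.card = k ∧
      (∀ A ∈ G, ∀ B ∈ G, A ≠ B → ¬A ⊆ B) ∧
      Set.InjOn c (↑G : Set (Finset (Fin n))) := by
  classical
  by_contra hG
  push_neg at hG
  -- colors on level j
  set L : ℕ → Finset ℕ := fun j => (Finset.univ.filter (fun A : Finset (Fin n) => A.card = j)).image c
    with hL
  -- Step 1 : each level has at most k-1 colors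
  have h1 : ∀ j, (L j).card ≤ k - 1 := by
    intro j
    by_contra hcon
    have hcard : k ≤ (L j).card := by omega
    obtain ⟨t, hts, htc, hti⟩ := pick_distinct c _ k hcard
    have hanti : ∀ A ∈ t, ∀ B ∈ t, A ≠ B → ¬A ⊆ B := by
      intro A hA B hB hne hsub
      have hAj : A.card = j := (Finset.mem_filter.mp (hts hA)).2
      have hBj : B.card = j := (Finset.mem_filter.mp (hts hB)).2
      exact hne (Finset.eq_of_subset_of_card_le hsub (by omega))
    exact hG t htc hanti hti
  -- Step 2 : each level j ∉ {0,k,n} has at most k-2 colors not on level k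
  have h2 : ∀ j, 1 ≤ j → j < n → j ≠ k → ((L j) \ (L k)).card ≤ k - 2 := by
    intro j hj1 hjn hjk
    by_contra hcon
    have hcard : k - 1 ≤ ((L j) \ (L k)).card := by omega
    set s' : Finset (Finset (Fin n)) :=
      Finset.univ.filter (fun A => A.card = j ∧ c A ∉ L k) with hs'
    have hsub : (L j) \ (L k) ⊆ s'.image c := by
      intro y hy
      rw [Finset.mem_sdiff] at hy
      obtain ⟨A, hA, rfl⟩ := Finset.mem_image.mp hy.1
      exact Finset.mem_image.mpr ⟨A, Finset.mem_filter.mpr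
        ⟨Finset.mem_univ _, (Finset.mem_filter.mp hA).2, hy.2⟩, rfl⟩
    obtain ⟨t, hts, htc, hti⟩ := pick_distinct c s' (k - 1)
      (le_trans hcard (Finset.card_le_card hsub))
    have htj : ∀ A ∈ t, A.card = j ∧ c A ∉ L k := fun A hA =>
      (Finset.mem_filter.mp (hts hA)).2
    -- find a k-set incomparable to everything in t
    obtain ⟨T, hTk, hTinc⟩ :
        ∃ T : Finset (Fin n), T.card = k ∧ ∀ A ∈ t, ¬A ⊆ T ∧ ¬T ⊆ A := by
      rcases lt_or_gt_of_ne hjk with hlt | hgt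
      · -- j < k : find U of size n - k meeting each A, take T = Uᶜ
        obtain ⟨U, hUc, hUhit⟩ := hit t (n - k)
          (fun A hA => Finset.card_pos.mp (by rw [(htj A hA).1]; omega))
          (by omega) (by omega)
        refine ⟨Uᶜ, ?_, ?_⟩
        · rw [Finset.card_compl, hUc, Fintype.card_fin]; omega
        · intro A hA
          obtain ⟨x, hxU, hxA⟩ := hUhit A hA
          constructor
          · intro hsubAT
            exact (Finset.mem_compl.mp (hsubAT hxA)) hxU
          · intro hsubTA
            have := Finset.card_le_card hsubTA
            rw [Finset.card_compl, hUc, Fintype.card_fin, (htj A hA).1] at this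
            omega
      · -- j > k : find T of size k meeting each Aᶜ
        obtain ⟨T, hTc, hThit⟩ := hit (t.image compl) k
          (by
            intro b hb
            obtain ⟨A, hA, rfl⟩ := Finset.mem_image.mp hb
            refine Finset.card_pos.mp ?_
            rw [Finset.card_compl, Fintype.card_fin, (htj A hA).1]; omega)
          (le_trans Finset.card_image_le (by omega)) (by omega)
        refine ⟨T, hTc, ?_⟩
        intro A hA
        obtain ⟨x, hxT, hxA⟩ := hThit Aᶜ (Finset.mem_image_of_mem _ hA)
        constructor
        · intro hsubAT
          have := Finset.card_le_card hsubAT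
          rw [hTc, (htj A hA).1] at this
          omega
        · intro hsubTA
          exact (Finset.mem_compl.mp hxA) (hsubTA hxT)
    have hcT : c T ∈ L k := Finset.mem_image_of_mem c
      (Finset.mem_filter.mpr ⟨Finset.mem_univ _, hTk⟩)
    have hTt : T ∉ t := by
      intro h
      have := (htj T h).1
      omega
    -- assemble the rainbow antichain
    refine hG (insert T t) ?_ ?_ ?_
    · rw [Finset.card_insert_of_notMem hTt, htc]; omega
    · intro A hA B hB hne
      rcases Finset.mem_insert.mp hA with rfl | hA'
      · rcases Finset.mem_insert.mp hB with rfl | hB'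
        · exact absurd rfl hne
        · exact (hTinc B hB').2
      · rcases Finset.mem_insert.mp hB with rfl | hB'
        · exact (hTinc A hA').1
        · intro hsub
          have hAj := (htj A hA').1
          have hBj := (htj B hB').1
          exact hne (Finset.eq_of_subset_of_card_le hsub (by omega))
    · intro a ha b hb hab
      simp only [Finset.coe_insert, Set.mem_insert_iff, Finset.mem_coe] at ha hb
      rcases ha with rfl | ha'
      · rcases hb with rfl | hb'
        · rfl
        · exact absurd (hab ▸ hcT) (htj b hb').2
      · rcases hb with rfl | hb'
        · exact absurd (hab ▸ hcT) (htj a ha').2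
        · exact hti ha' hb' hab
  -- Final counting
  set J : Finset ℕ := (Finset.Ico 1 n).erase k with hJ
  have hkJ : k ∈ Finset.Ico 1 n := Finset.mem_Ico.mpr ⟨by omega, by omega⟩
  have hJcard : J.card = n - 2 := by
    rw [hJ, Finset.card_erase_of_mem hkJ, Nat.card_Ico]; omega
  have hcover : Finset.univ.image c ⊆
      insert (c ∅) (insert (c Finset.univ)
        ((L k) ∪ J.biUnion (fun j => (L j) \ (L k)))) := by
    intro y hy
    obtain ⟨A, -, rfl⟩ := Finset.mem_image.mp hy
    by_cases h0 : A.card = 0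
    · rw [Finset.card_eq_zero.mp h0]
      exact Finset.mem_insert_self _ _
    by_cases hnn : A.card = n
    · have : A = Finset.univ := Finset.eq_univ_of_card A (by rw [hnn, Fintype.card_fin])
      rw [this]
      exact Finset.mem_insert_of_mem (Finset.mem_insert_self _ _)
    have hmemLA : c A ∈ L A.card := Finset.mem_image_of_mem c
      (Finset.mem_filter.mpr ⟨Finset.mem_univ _, rfl⟩)
    refine Finset.mem_insert_of_mem (Finset.mem_insert_of_mem ?_)
    by_cases hLk : c A ∈ L k
    · exact Finset.mem_union_left _ hLk
    · refine Finset.mem_union_right _ (Finset.mem_biUnion.mpr ⟨A.card, ?_, ?_⟩)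
      · have hle : A.card ≤ n := by
          simpa using Finset.card_le_card (Finset.subset_univ A)
        refine Finset.mem_erase.mpr ⟨?_, Finset.mem_Ico.mpr ⟨by omega, by omega⟩⟩
        intro h
        exact hLk (h ▸ hmemLA)
      · exact Finset.mem_sdiff.mpr ⟨hmemLA, hLk⟩
  have hcov := Finset.card_le_card hcover
  have b1 := Finset.card_insert_le (c ∅) (insert (c Finset.univ)
    ((L k) ∪ J.biUnion (fun j => (L j) \ (L k))))
  have b2 := Finset.card_insert_le (c Finset.univ)
    ((L k) ∪ J.biUnion (fun j => (L j) \ (L k)))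
  have b3 := Finset.card_union_le (L k) (J.biUnion (fun j => (L j) \ (L k)))
  have b5 := h1 k
  have b4 : (J.biUnion (fun j => (L j) \ (L k))).card ≤ (n - 2) * (k - 2) := by
    refine le_trans (Finset.card_biUnion_le) ?_
    calc ∑ j ∈ J, ((L j) \ (L k)).card ≤ ∑ _j ∈ J, (k - 2) := by
          refine Finset.sum_le_sum ?_
          intro j hj
          have hj' := Finset.mem_erase.mp hj
          have hj'' := Finset.mem_Ico.mp hj'.2
          exact h2 j hj''.1 hj''.2 hj'.1
      _ = (n - 2) * (k - 2) := by rw [Finset.sum_const, hJcard, smul_eq_mul]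
  set q := (n - 2) * (k - 2) with hq
  have hexp : (k - 2) * (n - 1) = q + (k - 2) := by
    have h : n - 1 = (n - 2) + 1 := by omega
    rw [hq, h, Nat.mul_succ, Nat.mul_comm (k - 2) (n - 2)]
  rw [hexp] at hc
  omega
end

section
/- For fixed k ≥ 1, 100k ≤ j ≤ 4√(n ln n), and n sufficiently large, C(n + 2√(n ln n), j) / C(n − 2√(n ln n), j) ≤ n^20. -/
open Real Filter

set_option maxHeartbeats 1000000

private lemma stmt12_desc (a b j : ℕ) (r : ℝ) (hr : 0 ≤ r)
    (h : ∀ i < j, ((a - i : ℕ) : ℝ) ≤ r * ((b - i : ℕ) : ℝ)) :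
    (a.descFactorial j : ℝ) ≤ r ^ j * (b.descFactorial j : ℝ) := by
  rw [Nat.descFactorial_eq_prod_range, Nat.descFactorial_eq_prod_range]
  push_cast
  calc (∏ i ∈ Finset.range j, ((a - i : ℕ) : ℝ))
      ≤ ∏ i ∈ Finset.range j, (r * ((b - i : ℕ) : ℝ)) :=
        Finset.prod_le_prod (fun i _ => by positivity)
          (fun i hi => h i (Finset.mem_range.mp hi))
    _ = r ^ j * ∏ i ∈ Finset.range j, ((b - i : ℕ) : ℝ) := by
        rw [Finset.prod_mul_distrib, Finset.prod_const, Finset.card_range]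

private lemma stmt12_choose (a b j : ℕ) (r : ℝ) (hr : 0 ≤ r)
    (h : ∀ i < j, ((a - i : ℕ) : ℝ) ≤ r * ((b - i : ℕ) : ℝ)) :
    (a.choose j : ℝ) ≤ r ^ j * (b.choose j : ℝ) := by
  have hd := stmt12_desc a b j r hr h
  rw [Nat.descFactorial_eq_factorial_mul_choose, Nat.descFactorial_eq_factorial_mul_choose] at hd
  push_cast at hd
  have hf : (0 : ℝ) < (j.factorial : ℝ) := by positivity
  rw [show r ^ j * ((j.factorial : ℝ) * (b.choose j : ℝ)) =
    (j.factorial : ℝ) * (r ^ j * (b.choose j : ℝ)) by ring] at hd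
  exact le_of_mul_le_mul_left hd hf

/-- For fixed `k ≥ 1`, `100k ≤ j ≤ 4√(n ln n)` and `n` large,
`C(n + 2√(n ln n), j) ≤ n^20 · C(n − 2√(n ln n), j)`. -/
theorem stmt12 (k : ℕ) (hk : 1 ≤ k) :
    ∃ N : ℕ, ∀ n : ℕ, N ≤ n → ∀ j : ℕ, 100 * k ≤ j →
      (j : ℝ) ≤ 4 * Real.sqrt (n * Real.log n) →
      (((n + ⌈2 * Real.sqrt (n * Real.log n)⌉₊).choose j : ℝ)) ≤
        (n : ℝ) ^ 20 * (((n - ⌈2 * Real.sqrt (n * Real.log n)⌉₊).choose j : ℝ)) := by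
  have h1 : ∀ᶠ x : ℝ in atTop, Real.log x ≤ x / 1156 := by
    filter_upwards [Real.isLittleO_log_id_atTop.bound (by norm_num : (0:ℝ) < 1/1156),
      eventually_ge_atTop (1:ℝ)] with x hx hx1
    have habs : |Real.log x| ≤ 1/1156 * |x| := by simpa using hx
    calc Real.log x ≤ |Real.log x| := le_abs_self _
      _ ≤ 1/1156 * |x| := habs
      _ = x / 1156 := by rw [abs_of_nonneg (by linarith)]; ring
  have h2 : ∀ᶠ n : ℕ in atTop, Real.log n ≤ (n : ℝ) / 1156 :=
    tendsto_natCast_atTop_atTop.eventually h1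
  obtain ⟨N, hN⟩ := eventually_atTop.mp (h2.and (eventually_ge_atTop 3))
  refine ⟨N, fun n hn j _ hj4 => ?_⟩
  obtain ⟨hlogn, hn3⟩ := hN n hn
  set S := Real.sqrt ((n : ℝ) * Real.log n) with hSdef
  set s := ⌈2 * S⌉₊ with hsdef
  have hn3c : (3 : ℝ) ≤ (n : ℝ) := by exact_mod_cast hn3
  have hn0 : (0 : ℝ) < (n : ℝ) := by linarith
  have hlog1 : 1 ≤ Real.log n := by
    rw [Real.le_log_iff_exp_le hn0]
    calc Real.exp 1 ≤ 2.7182818286 := Real.exp_one_lt_d9.le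
      _ ≤ 3 := by norm_num
      _ ≤ (n : ℝ) := hn3c
  have hS0 : 0 ≤ S := Real.sqrt_nonneg _
  have hS2 : S * S = (n : ℝ) * Real.log n := Real.mul_self_sqrt (by positivity)
  have hsle : (s : ℝ) ≤ 2 * S + 1 := (Nat.ceil_lt_add_one (by positivity)).le
  have hS34 : S ≤ (n : ℝ) / 34 := by
    rw [hSdef, show (n : ℝ) / 34 = Real.sqrt (((n : ℝ) / 34) ^ 2) from
      (Real.sqrt_sq (by positivity)).symm]
    apply Real.sqrt_le_sqrt
    nlinarith
  have hSbig : 32 * Real.log n + 2 ≤ S := by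
    nlinarith [hS2, hS0, hlogn, hlog1, sq_nonneg (Real.log n - 1),
      mul_le_mul_of_nonneg_left hlogn (by linarith : (0:ℝ) ≤ 1156 * Real.log n)]
  have hsj : s + j ≤ n := by
    have : (s : ℝ) + (j : ℝ) ≤ (n : ℝ) := by nlinarith
    exact_mod_cast this
  have hjb : j ≤ n - s := by omega
  set r : ℝ := 1 + 5 * S / (n : ℝ) with hrdef
  have hr0 : (0 : ℝ) ≤ r := by positivity
  have key : ∀ i < j, ((n + s - i : ℕ) : ℝ) ≤ r * ((n - s - i : ℕ) : ℝ) := by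
    intro i hi
    have hij : (i : ℝ) + 1 ≤ (j : ℝ) := by exact_mod_cast hi
    have hin : i ≤ n - s := le_trans (Nat.le_of_lt hi) hjb
    rw [Nat.cast_sub (by omega : i ≤ n + s), Nat.cast_sub hin,
      Nat.cast_sub (by omega : s ≤ n)]
    push_cast
    -- goal : (n:ℝ) + s - i ≤ r * ((n:ℝ) - s - i)
    have hX : (n : ℝ) - 6 * S ≤ (n : ℝ) - (s : ℝ) - (i : ℝ) := by nlinarith
    have hmain : 2 * (s : ℝ) ≤ 5 * S / (n : ℝ) * ((n : ℝ) - (s : ℝ) - (i : ℝ)) := by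
      rw [show 5 * S / (n : ℝ) * ((n : ℝ) - (s : ℝ) - (i : ℝ)) =
        5 * S * ((n : ℝ) - (s : ℝ) - (i : ℝ)) / (n : ℝ) by ring, le_div_iff₀ hn0]
      have e1 : 5 * S * ((n : ℝ) - 6 * S) ≤ 5 * S * ((n : ℝ) - (s : ℝ) - (i : ℝ)) :=
        mul_le_mul_of_nonneg_left hX (by positivity)
      have e2 : 2 * (s : ℝ) * (n : ℝ) ≤ (4 * S + 2) * (n : ℝ) := by nlinarith
      have e3 : (4 * S + 2) * (n : ℝ) ≤ 5 * S * ((n : ℝ) - 6 * S) := by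
        have h30 : 0 ≤ S - 30 * Real.log n - 2 := by linarith
        nlinarith [mul_nonneg hn0.le h30]
      linarith
    rw [hrdef, show (1 + 5 * S / (n : ℝ)) * ((n : ℝ) - (s : ℝ) - (i : ℝ)) =
      ((n : ℝ) - (s : ℝ) - (i : ℝ)) + 5 * S / (n : ℝ) * ((n : ℝ) - (s : ℝ) - (i : ℝ)) by ring]
    linarith [hmain]
  have main := stmt12_choose (n + s) (n - s) j r hr0 key
  have hrj : r ^ j ≤ (n : ℝ) ^ 20 := by
    have hre : r ≤ Real.exp (5 * S / (n : ℝ)) := by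
      have := Real.add_one_le_exp (5 * S / (n : ℝ)); linarith
    calc r ^ j ≤ Real.exp (5 * S / (n : ℝ)) ^ j := pow_le_pow_left₀ hr0 hre j
      _ = Real.exp ((j : ℝ) * (5 * S / (n : ℝ))) := by rw [← Real.exp_nat_mul]
      _ ≤ Real.exp (20 * Real.log n) := by
          apply Real.exp_le_exp.mpr
          rw [show (j : ℝ) * (5 * S / (n : ℝ)) = 5 * (j : ℝ) * S / (n : ℝ) by ring,
            div_le_iff₀ hn0]
          have := mul_le_mul_of_nonneg_right hj4 hS0
          nlinarith
      _ = (n : ℝ) ^ 20 := by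
          rw [show (20 : ℝ) * Real.log n = Real.log ((n : ℝ) ^ 20) by
            rw [Real.log_pow]; push_cast; ring, Real.exp_log (by positivity)]
  calc ((n + s).choose j : ℝ) ≤ r ^ j * ((n - s).choose j : ℝ) := main
    _ ≤ (n : ℝ) ^ 20 * ((n - s).choose j : ℝ) :=
        mul_le_mul_of_nonneg_right hrj (Nat.cast_nonneg _)
end

section
/- If P is a finite poset that contains neither a weak copy of 2C_2 (two disjoint comparable pairs) nor a chain of 3 elements, then every poset in P⁻(P) = {P \ {m} : m maximal or minimal in P} is an antichain on |P|−1 elements; consequently La(n, P⁻(P)) = |P|−2 and ar(n,P) = |P|−1 for n ≥ |P|. -/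
theorem chain3aux (P : Type*) [PartialOrder P]
    (hC3 : ¬∃ x y z : P, x < y ∧ y < z) {x y z : P} (h1 : x < y) (h2 : y < z) : False :=
  hC3 ⟨x, y, z, h1, h2⟩

theorem pairaux (P : Type*) [PartialOrder P]
    (h2C2 : ¬∃ a b c d : P, a < b ∧ c < d ∧ a ≠ c ∧ a ≠ d ∧ b ≠ c ∧ b ≠ d)
    {a b p r : P} (hab : a < b) (hpr : p < r) :
    a = p ∨ a = r ∨ b = p ∨ b = r := by
  by_contra hc
  push_neg at hc
  exact h2C2 ⟨a, b, p, r, hab, hpr, hc.1, hc.2.1, hc.2.2.1, hc.2.2.2⟩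

/-- If a finite poset `P` contains no weak copy of `2C₂` (two disjoint comparable pairs)
and no 3-chain, then `P⁻(P)` contains an antichain on `|P|−1` elements: there is a
maximal or minimal element `m` such that `P \ {m}` is an antichain. -/
theorem stmt15 (P : Type*) [PartialOrder P] [Fintype P] [Nonempty P]
    (h2C2 : ¬∃ a b c d : P, a < b ∧ c < d ∧ a ≠ c ∧ a ≠ d ∧ b ≠ c ∧ b ≠ d)
    (hC3 : ¬∃ x y z : P, x < y ∧ y < z) :
    ∃ m : P, ((∀ q, m ≤ q → q = m) ∨ (∀ q, q ≤ m → q = m)) ∧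
      ∀ p q : P, p ≠ m → q ≠ m → ¬p < q := by
  by_cases hpair : ∃ a b : P, a < b
  · obtain ⟨a, b, hab⟩ := hpair
    by_cases hq : ∃ q, q ≠ b ∧ a < q
    · obtain ⟨q, hqb, haq⟩ := hq
      refine ⟨a, Or.inr fun x hx => ?_, fun p r hp hr hpr => ?_⟩
      · rcases eq_or_lt_of_le hx with h | h
        · exact h
        · exact (chain3aux P hC3 h hab).elim
      · have hrb : a = p ∨ b = r := by
          rcases pairaux P h2C2 hab hpr with h | h | h | h
          · exact Or.inl h
          · subst h; exact (chain3aux P hC3 hpr hab).elim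
          · subst h; exact (chain3aux P hC3 hab hpr).elim
          · exact Or.inr h
        have hrq : a = p ∨ q = r := by
          rcases pairaux P h2C2 haq hpr with h | h | h | h
          · exact Or.inl h
          · subst h; exact (chain3aux P hC3 hpr haq).elim
          · subst h; exact (chain3aux P hC3 haq hpr).elim
          · exact Or.inr h
        rcases hrb with h | h
        · exact hp h.symm
        rcases hrq with h' | h'
        · exact hp h'.symm
        · exact hqb (h' ▸ h.symm ▸ rfl)
    · push_neg at hq
      refine ⟨b, Or.inl fun x hx => ?_, fun p r hp hr hpr => ?_⟩
      · rcases eq_or_lt_of_le hx with h | h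
        · exact h.symm
        · exact (chain3aux P hC3 hab h).elim
      · rcases pairaux P h2C2 hab hpr with h | h | h | h
        · subst h; exact hr (by by_contra hne; exact hq r hne hpr)
        · subst h; exact chain3aux P hC3 hpr hab
        · subst h; exact hp rfl
        · subst h; exact hr rfl
  · push_neg at hpair
    obtain m := Classical.arbitrary P
    exact ⟨m, Or.inl fun x hx => ((lt_or_eq_of_le hx).resolve_left (hpair m x)).symm,
      fun p r _ _ hpr => hpair p r hpr⟩
end

section
/- Color 2^[n] as follows: each subset of [n] of size ⌊n/2⌋ or ⌊n/2⌋+1 gets its own distinct color, and all other subsets get one common color (white). Then there is no rainbow strong copy of the butterfly poset ⋈ (elements a_1,a_2 < b_1,b_2 with a_1,a_2 incomparable and b_1,b_2 incomparable). Hence ar*(n,⋈) ≥ C(n,⌊n/2⌋) + C(n,⌊n/2⌋+1) + 1. -/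
/-- If `W` is white and `S, B₁, B₂` are colored, with `S, W ⊆ B₁ ∩ B₂` and `B₁, B₂`
incomparable, then `W ⊆ S` (in fact `S = B₁ ∩ B₂`). -/
lemma stmt17_aux (n : ℕ) (W S B₁ B₂ : Finset (Fin n))
    (hW : ¬(W.card = n / 2 ∨ W.card = n / 2 + 1))
    (hS : S.card = n / 2 ∨ S.card = n / 2 + 1)
    (hB1 : B₁.card = n / 2 ∨ B₁.card = n / 2 + 1)
    (hB2 : B₂.card = n / 2 ∨ B₂.card = n / 2 + 1)
    (hSB1 : S ⊆ B₁) (hSB2 : S ⊆ B₂) (hWB1 : W ⊆ B₁) (hWB2 : W ⊆ B₂)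
    (hB12 : ¬B₁ ⊆ B₂) (hB21 : ¬B₂ ⊆ B₁) : W ⊆ S := by
  have hI1 : B₁ ∩ B₂ ⊂ B₁ := by
    rw [Finset.ssubset_iff_subset_ne]
    exact ⟨Finset.inter_subset_left, fun h => hB12 (h ▸ Finset.inter_subset_right)⟩
  have hI2 : B₁ ∩ B₂ ⊂ B₂ := by
    rw [Finset.ssubset_iff_subset_ne]
    exact ⟨Finset.inter_subset_right, fun h => hB21 (h ▸ Finset.inter_subset_left)⟩
  have hc1 : (B₁ ∩ B₂).card < B₁.card := Finset.card_lt_card hI1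
  have hc2 : (B₁ ∩ B₂).card < B₂.card := Finset.card_lt_card hI2
  have hSI : S ⊆ B₁ ∩ B₂ := Finset.subset_inter hSB1 hSB2
  have hSIc : S.card ≤ (B₁ ∩ B₂).card := Finset.card_le_card hSI
  have hIc : (B₁ ∩ B₂).card ≤ S.card := by omega
  have hEq : S = B₁ ∩ B₂ := Finset.eq_of_subset_of_card_le hSI hIc
  rw [hEq]
  exact Finset.subset_inter hWB1 hWB2

/-- Coloring every set of size `⌊n/2⌋` or `⌊n/2⌋+1` with its own color and everything
else white admits no rainbow strong copy of the butterfly poset `⋈`. -/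
theorem stmt17 (n : ℕ) (c : Finset (Fin n) → Option (Finset (Fin n)))
    (hc : c = fun A => if A.card = n / 2 ∨ A.card = n / 2 + 1 then some A else none) :
    ¬∃ A₁ A₂ B₁ B₂ : Finset (Fin n),
      A₁ ⊆ B₁ ∧ A₁ ⊆ B₂ ∧ A₂ ⊆ B₁ ∧ A₂ ⊆ B₂ ∧
      ¬A₁ ⊆ A₂ ∧ ¬A₂ ⊆ A₁ ∧ ¬B₁ ⊆ B₂ ∧ ¬B₂ ⊆ B₁ ∧
      c A₁ ≠ c A₂ ∧ c A₁ ≠ c B₁ ∧ c A₁ ≠ c B₂ ∧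
      c A₂ ≠ c B₁ ∧ c A₂ ≠ c B₂ ∧ c B₁ ≠ c B₂ := by
  subst hc
  rintro ⟨A₁, A₂, B₁, B₂, h11, h12, h21, h22, hA12, hA21, hB12, hB21,
    c12, c1b1, c1b2, c2b1, c2b2, cbb⟩
  simp only at c12 c1b1 c1b2 c2b1 c2b2 cbb
  by_cases p1 : A₁.card = n / 2 ∨ A₁.card = n / 2 + 1
  · by_cases p2 : A₂.card = n / 2 ∨ A₂.card = n / 2 + 1
    · -- both A's colored: union is big, forces B₁ ⊆ B₂ or similar contradiction
      have hU : A₁ ⊂ A₁ ∪ A₂ := by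
        rw [Finset.ssubset_iff_subset_ne]
        refine ⟨Finset.subset_union_left, fun h => hA21 ?_⟩
        exact le_trans Finset.subset_union_right h.symm.le
      have hUc : A₁.card < (A₁ ∪ A₂).card := Finset.card_lt_card hU
      -- at least one B is colored
      have hB : (B₁.card = n / 2 ∨ B₁.card = n / 2 + 1) ∨
          (B₂.card = n / 2 ∨ B₂.card = n / 2 + 1) := by
        by_contra hcon
        push_neg at hcon
        rw [if_neg (not_or.mpr hcon.1), if_neg (not_or.mpr hcon.2)] at cbb
        exact cbb rfl
      rcases hB with hB | hB
      · have hUB : A₁ ∪ A₂ ⊆ B₁ := Finset.union_subset h11 h21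
        have hI : B₁ ∩ B₂ ⊂ B₁ := by
          rw [Finset.ssubset_iff_subset_ne]
          exact ⟨Finset.inter_subset_left, fun h => hB12 (h ▸ Finset.inter_subset_right)⟩
        have h1 : (A₁ ∪ A₂).card ≤ (B₁ ∩ B₂).card :=
          Finset.card_le_card (Finset.subset_inter hUB (Finset.union_subset h12 h22))
        have h2 : (B₁ ∩ B₂).card < B₁.card := Finset.card_lt_card hI
        omega
      · have hUB : A₁ ∪ A₂ ⊆ B₂ := Finset.union_subset h12 h22
        have hI : B₁ ∩ B₂ ⊂ B₂ := by
          rw [Finset.ssubset_iff_subset_ne]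
          exact ⟨Finset.inter_subset_right, fun h => hB21 (h ▸ Finset.inter_subset_left)⟩
        have h1 : (A₁ ∪ A₂).card ≤ (B₁ ∩ B₂).card :=
          Finset.card_le_card (Finset.subset_inter (Finset.union_subset h11 h21) hUB)
        have h2 : (B₁ ∩ B₂).card < B₂.card := Finset.card_lt_card hI
        omega
    · -- A₂ white; then B₁, B₂ colored (they differ from A₂'s color)
      have hB1 : B₁.card = n / 2 ∨ B₁.card = n / 2 + 1 := by
        by_contra hcon
        rw [if_neg hcon, if_neg p2] at c2b1
        exact c2b1 rfl
      have hB2 : B₂.card = n / 2 ∨ B₂.card = n / 2 + 1 := by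
        by_contra hcon
        rw [if_neg hcon, if_neg p2] at c2b2
        exact c2b2 rfl
      exact hA21 (stmt17_aux n A₂ A₁ B₁ B₂ p2 p1 hB1 hB2 h11 h12 h21 h22 hB12 hB21)
  · -- A₁ white; then A₂, B₁, B₂ colored
    have p2 : A₂.card = n / 2 ∨ A₂.card = n / 2 + 1 := by
      by_contra hcon
      rw [if_neg p1, if_neg hcon] at c12
      exact c12 rfl
    have hB1 : B₁.card = n / 2 ∨ B₁.card = n / 2 + 1 := by
      by_contra hcon
      rw [if_neg p1, if_neg hcon] at c1b1
      exact c1b1 rfl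
    have hB2 : B₂.card = n / 2 ∨ B₂.card = n / 2 + 1 := by
      by_contra hcon
      rw [if_neg p1, if_neg hcon] at c1b2
      exact c1b2 rfl
    exact hA12 (stmt17_aux n A₁ A₂ B₁ B₂ p1 p2 hB1 hB2 h21 h22 h11 h12 hB12 hB21)
end

section
/- For n sufficiently large, any coloring of 2^[n] with no rainbow strong copy of the poset ∧_s + A_k (a broom plus a disjoint antichain) uses at most (n−1)(sn/2 + k + 1) + 2 colors; in particular ar*(n, ∧_s + A_k) = O_{s,k}(n²). -/
open Finset

def hasCopy (s k n : ℕ) (c : Finset (Fin n) → ℕ) : Prop :=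
  ∃ (C : Fin s → Finset (Fin n)) (D : Finset (Fin n)) (E : Fin k → Finset (Fin n)),
        (∀ i, C i ⊆ D ∧ C i ≠ D) ∧
        (∀ i j, i ≠ j → ¬C i ⊆ C j) ∧
        (∀ i j, i ≠ j → ¬E i ⊆ E j) ∧
        (∀ i j, ¬C i ⊆ E j ∧ ¬E j ⊆ C i) ∧
        (∀ j, ¬D ⊆ E j ∧ ¬E j ⊆ D) ∧
        (∀ i j, i ≠ j → c (C i) ≠ c (C j)) ∧
        (∀ i j, i ≠ j → c (E i) ≠ c (E j)) ∧
        (∀ i j, c (C i) ≠ c (E j)) ∧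
        (∀ i, c (C i) ≠ c D) ∧ (∀ j, c (E j) ≠ c D)

lemma exists_fun_of_card {α : Type*} (S : Finset α) {m : ℕ} (h : S.card = m) :
    ∃ f : Fin m → α, (∀ i, f i ∈ S) ∧ ∀ i j, f i = f j → i = j := by
  subst h
  exact ⟨fun i => (S.equivFin.symm i).1, fun i => (S.equivFin.symm i).2,
    fun i j hij => S.equivFin.symm.injective (Subtype.ext hij)⟩

lemma build_copy {n : ℕ} (s k : ℕ) (c : Finset (Fin n) → ℕ)
    (Cs Es : Finset (Finset (Fin n))) (D : Finset (Fin n))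
    (hCs : Cs.card = s) (hEs : Es.card = k)
    (h1 : ∀ A ∈ Cs, A ⊆ D ∧ A ≠ D)
    (h2 : ∀ A ∈ Cs, ∀ B ∈ Cs, A ≠ B → ¬A ⊆ B)
    (h3 : ∀ A ∈ Es, ∀ B ∈ Es, A ≠ B → ¬A ⊆ B)
    (h4 : ∀ A ∈ Cs, ∀ B ∈ Es, ¬A ⊆ B ∧ ¬B ⊆ A)
    (h5 : ∀ B ∈ Es, ¬D ⊆ B ∧ ¬B ⊆ D)
    (h6 : ∀ A ∈ Cs, ∀ B ∈ Cs, c A = c B → A = B)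
    (h7 : ∀ A ∈ Es, ∀ B ∈ Es, c A = c B → A = B)
    (h8 : ∀ A ∈ Cs, ∀ B ∈ Es, c A ≠ c B)
    (h9 : ∀ A ∈ Cs, c A ≠ c D)
    (h10 : ∀ B ∈ Es, c B ≠ c D) : hasCopy s k n c := by
  obtain ⟨C, hCmem, hCinj⟩ := exists_fun_of_card Cs hCs
  obtain ⟨E, hEmem, hEinj⟩ := exists_fun_of_card Es hEs
  refine ⟨C, D, E, fun i => h1 _ (hCmem i),
    fun i j hij => h2 _ (hCmem i) _ (hCmem j) (fun h => hij (hCinj _ _ h)),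
    fun i j hij => h3 _ (hEmem i) _ (hEmem j) (fun h => hij (hEinj _ _ h)),
    fun i j => h4 _ (hCmem i) _ (hEmem j),
    fun j => h5 _ (hEmem j),
    fun i j hij hc => hij (hCinj _ _ (h6 _ (hCmem i) _ (hCmem j) hc)),
    fun i j hij hc => hij (hEinj _ _ (h7 _ (hEmem i) _ (hEmem j) hc)),
    fun i j => h8 _ (hCmem i) _ (hEmem j),
    fun i => h9 _ (hCmem i),
    fun j => h10 _ (hEmem j)⟩

lemma not_subset_of_card_eq {n : ℕ} {A B : Finset (Fin n)} (h : A.card = B.card)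
    (hne : A ≠ B) : ¬A ⊆ B :=
  fun hsub => hne (Finset.eq_of_subset_of_card_le hsub (le_of_eq h.symm))

lemma exists_reps {α β : Type*} [DecidableEq α] [DecidableEq β] (A : Finset α) (c : α → β) :
    ∃ R : Finset α, R ⊆ A ∧ R.card = (A.image c).card ∧
      ∀ a ∈ R, ∀ b ∈ R, c a = c b → a = b := by
  classical
  have h : ∀ b ∈ A.image c, ∃ a ∈ A, c a = b := fun b hb => Finset.mem_image.mp hb
  choose f hf1 hf2 using h
  refine ⟨(A.image c).attach.image (fun b => f b.1 b.2), ?_, ?_, ?_⟩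
  · intro a ha
    simp only [Finset.mem_image, Finset.mem_attach, true_and] at ha
    obtain ⟨b, rfl⟩ := ha
    exact hf1 _ _
  · rw [Finset.card_image_of_injective _ ?_, Finset.card_attach]
    intro b1 b2 he
    apply Subtype.ext
    rw [← hf2 b1.1 b1.2, ← hf2 b2.1 b2.2]
    exact congrArg c he
  · intro a ha b hb hc
    simp only [Finset.mem_image, Finset.mem_attach, true_and] at ha hb
    obtain ⟨b1, rfl⟩ := ha
    obtain ⟨b2, rfl⟩ := hb
    rw [hf2 b1.1 b1.2, hf2 b2.1 b2.2] at hc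
    exact congrArg (fun x => f x.1 x.2) (Subtype.ext hc : b1 = b2)

lemma count_miss {n : ℕ} (V : Finset (Fin n)) (F : Finset (Finset (Fin n))) (j : ℕ)
    (h : ∀ A ∈ F, A ⊆ V ∧ A.card = j) :
    ∑ x ∈ V, (F.filter (fun A => x ∉ A)).card = F.card * (V.card - j) := by
  classical
  calc ∑ x ∈ V, (F.filter (fun A => x ∉ A)).card
      = ∑ x ∈ V, ∑ A ∈ F, (if x ∉ A then 1 else 0) := by
        refine Finset.sum_congr rfl fun x _ => ?_
        rw [Finset.card_filter]
    _ = ∑ A ∈ F, ∑ x ∈ V, (if x ∉ A then 1 else 0) := Finset.sum_comm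
    _ = ∑ A ∈ F, (V.card - j) := by
        refine Finset.sum_congr rfl fun A hA => ?_
        rw [← Finset.card_filter]
        have hVA : V.filter (fun x => x ∉ A) = V \ A := by
          ext y; simp [Finset.mem_sdiff]
        rw [hVA, Finset.card_sdiff_of_subset (h A hA).1, (h A hA).2]
    _ = F.card * (V.card - j) := by rw [Finset.sum_const, smul_eq_mul]

set_option maxHeartbeats 1000000 in
/-- Key level lemma: under no rainbow copy, a middle level carries few colors. -/
lemma level_bound {n s k : ℕ} (hs : 1 ≤ s) (hn : 4*k + 4*s + 14 ≤ n)
    (j : ℕ) (hj1 : 1 ≤ j) (hj2 : j + 2 ≤ n)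
    (c : Finset (Fin n) → ℕ) (hno : ¬ hasCopy s k n c) :
    2 * (((Finset.univ.filter (fun A : Finset (Fin n) => A.card = j)).image c).card)
      ≤ s * n + 2 * k := by
  classical
  by_contra hcon
  push_neg at hcon
  obtain ⟨R, hRsub, hRcard, hRinj⟩ :=
    exists_reps (Finset.univ.filter (fun A : Finset (Fin n) => A.card = j)) c
  have hRj : ∀ A ∈ R, A.card = j := fun A hA => (Finset.mem_filter.mp (hRsub hA)).2
  have hr : s * n + 2 * k < 2 * R.card := by rw [hRcard]; exact hcon
  have hsn1 : s * (4*k + 4*s + 14) ≤ s * n := Nat.mul_le_mul_left s hn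
  have hsn2 : s * (4*k + 4*s + 14) = 4*(s*k) + 4*(s*s) + 14*s := by ring
  have hss : s ≤ s * s := Nat.le_mul_of_pos_left s hs
  have hsk : 0 ≤ s * k := Nat.zero_le _
  -- r is reasonably large
  have hrs : s + 1 ≤ R.card := by nlinarith
  have hrk : k + 2 ≤ R.card := by nlinarith
  -- Step A : some (s+1)-subfamily has union ≠ univ
  have hex : ∃ G ∈ R.powersetCard (s+1), G.sup id ≠ Finset.univ := by
    by_contra hAll
    push_neg at hAll
    have hmiss : ∀ x : Fin n, (R.filter (fun A => x ∉ A)).card ≤ s := by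
      intro x
      by_contra hx
      push_neg at hx
      obtain ⟨G, hGsub, hGcard⟩ := Finset.exists_subset_card_eq (Nat.succ_le_of_lt hx)
      have hGR : G ⊆ R := hGsub.trans (Finset.filter_subset _ _)
      have hsup := hAll G (Finset.mem_powersetCard.mpr ⟨hGR, hGcard⟩)
      have hxmem : x ∈ G.sup id := by rw [hsup]; exact Finset.mem_univ x
      rw [Finset.mem_sup] at hxmem
      obtain ⟨A, hA, hxA⟩ := hxmem
      exact (Finset.mem_filter.mp (hGsub hA)).2 hxA
    have hcount := count_miss Finset.univ R j (fun A hA => ⟨Finset.subset_univ A, hRj A hA⟩)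
    have hle : ∑ x ∈ (Finset.univ : Finset (Fin n)), (R.filter (fun A => x ∉ A)).card
        ≤ n * s := by
      calc ∑ x ∈ (Finset.univ : Finset (Fin n)), (R.filter (fun A => x ∉ A)).card
          ≤ ∑ _x ∈ (Finset.univ : Finset (Fin n)), s :=
            Finset.sum_le_sum (fun x _ => hmiss x)
        _ = n * s := by rw [Finset.sum_const, smul_eq_mul, Finset.card_univ, Fintype.card_fin]
    rw [hcount, Finset.card_univ, Fintype.card_fin] at hle
    have h2nj : 2 ≤ n - j := by omega
    have : 2 * R.card ≤ R.card * (n - j) := by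
      rw [mul_comm 2 R.card]; exact Nat.mul_le_mul_left R.card h2nj
    have hns : n * s = s * n := mul_comm n s
    linarith
  obtain ⟨G0, hG0mem, hG0ne⟩ := hex
  -- minimal union M
  set S := (R.powersetCard (s+1)).filter (fun G => G.sup id ≠ Finset.univ) with hSdef
  have hSne : S.Nonempty := ⟨G0, Finset.mem_filter.mpr ⟨hG0mem, hG0ne⟩⟩
  obtain ⟨F', hF'S, hF'min⟩ := Finset.exists_min_image S (fun G => (G.sup id).card) hSne
  have hF'mem := (Finset.mem_filter.mp hF'S).1
  have hF'ne := (Finset.mem_filter.mp hF'S).2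
  obtain ⟨hF'R, hF'card⟩ := Finset.mem_powersetCard.mp hF'mem
  set M := F'.sup id with hMdef
  have hMne : M ≠ Finset.univ := hF'ne
  have hMn : M.card ≤ n := le_trans (Finset.card_le_univ M) (by simp)
  have hsubM : ∀ A ∈ F', A ⊆ M := fun A hA => Finset.le_sup (f := id) hA
  -- |M| ≥ j+1
  have hMcard : j + 1 ≤ M.card := by
    have h2 : 1 < F'.card := by omega
    obtain ⟨A, hA, B, hB, hAB⟩ := Finset.one_lt_card.mp h2
    by_contra hM
    push_neg at hM
    have hAM : A = M := Finset.eq_of_subset_of_card_le (hsubM A hA)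
      (by rw [hRj A (hF'R hA)]; omega)
    have hBM : B = M := Finset.eq_of_subset_of_card_le (hsubM B hB)
      (by rw [hRj B (hF'R hB)]; omega)
    exact hAB (hAM.trans hBM.symm)
  -- key minimality property
  have KP : ∀ G ⊆ R, G.card = s + 1 → G.sup id ⊆ M → G.sup id = M := by
    intro G hGR hGcard hGM
    have hGne : G.sup id ≠ Finset.univ := by
      intro h
      exact hMne (Finset.univ_subset_iff.mp (h ▸ hGM))
    have hGS : G ∈ S := Finset.mem_filter.mpr ⟨Finset.mem_powersetCard.mpr ⟨hGR, hGcard⟩, hGne⟩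
    exact Finset.eq_of_subset_of_card_le hGM (hF'min G hGS)
  set T := R.filter (fun A => A ⊆ M) with hTdef
  have hTR : T ⊆ R := Finset.filter_subset _ _
  have hTj : ∀ A ∈ T, A.card = j := fun A hA => hRj A (hTR hA)
  have hTM : ∀ A ∈ T, A ⊆ M := fun A hA => (Finset.mem_filter.mp hA).2
  have hF'T : F' ⊆ T := fun A hA =>
    Finset.mem_filter.mpr ⟨hF'R hA, hsubM A hA⟩
  set U := R \ T with hUdef
  have hUcard : U.card = R.card - T.card := Finset.card_sdiff_of_subset hTR
  have hTcard : T.card ≤ R.card := Finset.card_le_card hTR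
  have hUR : U ⊆ R := Finset.sdiff_subset
  have hUnotM : ∀ B ∈ U, ¬ B ⊆ M := by
    intro B hB
    have := (Finset.mem_sdiff.mp hB).2
    intro hBM
    exact this (Finset.mem_filter.mpr ⟨(Finset.mem_sdiff.mp hB).1, hBM⟩)
  have hTge : s + 1 ≤ T.card := by
    calc s + 1 = F'.card := hF'card.symm
    _ ≤ T.card := Finset.card_le_card hF'T
  -- the set of at most one representative sharing a given color
  have hbad : ∀ d : ℕ, (R.filter (fun A => c A = d)).card ≤ 1 := by
    intro d
    refine Finset.card_le_one.mpr (fun a ha b hb => ?_)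
    have ha' := Finset.mem_filter.mp ha
    have hb' := Finset.mem_filter.mp hb
    exact hRinj a ha'.1 b hb'.1 (ha'.2.trans hb'.2.symm)
  by_cases hU : k + 1 ≤ U.card
  · -- main case : enough representatives outside M
    exfalso
    set bad := R.filter (fun A => c A = c M) with hbaddef
    have hbad1 : bad.card ≤ 1 := hbad (c M)
    have hCs' : s ≤ (F' \ bad).card := by
      have := Finset.card_le_card_sdiff_add_card (s := F') (t := bad)
      omega
    obtain ⟨Cs, hCsSub, hCsCard⟩ := Finset.exists_subset_card_eq hCs'
    have hEs' : k ≤ (U \ bad).card := by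
      have := Finset.card_le_card_sdiff_add_card (s := U) (t := bad)
      omega
    obtain ⟨Es, hEsSub, hEsCard⟩ := Finset.exists_subset_card_eq hEs'
    have hCsT : ∀ A ∈ Cs, A ∈ T := fun A hA => hF'T (Finset.mem_sdiff.mp (hCsSub hA)).1
    have hCsF' : ∀ A ∈ Cs, A ∈ F' := fun A hA => (Finset.mem_sdiff.mp (hCsSub hA)).1
    have hCsbad : ∀ A ∈ Cs, A ∉ bad := fun A hA => (Finset.mem_sdiff.mp (hCsSub hA)).2
    have hEsU : ∀ B ∈ Es, B ∈ U := fun B hB => (Finset.mem_sdiff.mp (hEsSub hB)).1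
    have hEsbad : ∀ B ∈ Es, B ∉ bad := fun B hB => (Finset.mem_sdiff.mp (hEsSub hB)).2
    have hCsR : ∀ A ∈ Cs, A ∈ R := fun A hA => hTR (hCsT A hA)
    have hEsR : ∀ B ∈ Es, B ∈ R := fun B hB => hUR (hEsU B hB)
    have hnotbad : ∀ A ∈ R, A ∉ bad → c A ≠ c M := by
      intro A hA hAb h
      exact hAb (Finset.mem_filter.mpr ⟨hA, h⟩)
    refine hno (build_copy s k c Cs Es M hCsCard hEsCard ?_ ?_ ?_ ?_ ?_ ?_ ?_ ?_ ?_ ?_)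
    · intro A hA
      refine ⟨hTM A (hCsT A hA), ?_⟩
      intro h
      have hc1 := hRj A (hCsR A hA)
      rw [h] at hc1
      omega
    · intro A hA B hB hne
      exact not_subset_of_card_eq (by rw [hRj A (hCsR A hA), hRj B (hCsR B hB)]) hne
    · intro A hA B hB hne
      exact not_subset_of_card_eq (by rw [hRj A (hEsR A hA), hRj B (hEsR B hB)]) hne
    · intro A hA B hB
      have hne : A ≠ B := by
        intro h
        exact hUnotM B (hEsU B hB) (h ▸ hTM A (hCsT A hA))
      exact ⟨not_subset_of_card_eq (by rw [hRj A (hCsR A hA), hRj B (hEsR B hB)]) hne,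
        not_subset_of_card_eq (by rw [hRj A (hCsR A hA), hRj B (hEsR B hB)]) hne.symm⟩
    · intro B hB
      constructor
      · intro h
        have := Finset.card_le_card h
        have := hRj B (hEsR B hB)
        omega
      · exact hUnotM B (hEsU B hB)
    · exact fun A hA B hB h => hRinj A (hCsR A hA) B (hCsR B hB) h
    · exact fun A hA B hB h => hRinj A (hEsR A hA) B (hEsR B hB) h
    · intro A hA B hB h
      have : A = B := hRinj A (hCsR A hA) B (hEsR B hB) h
      exact hUnotM B (hEsU B hB) (this ▸ hTM A (hCsT A hA))
    · exact fun A hA => hnotbad A (hCsR A hA) (hCsbad A hA)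
    · exact fun B hB => hnotbad B (hEsR B hB) (hEsbad B hB)
  · -- few representatives outside M
    push_neg at hU
    have hTbig : R.card - k ≤ T.card := by omega
    have h2T : s * n < 2 * T.card := by omega
    -- show |M| = j + 1
    have hMj1 : M.card = j + 1 := by
      by_contra hMj
      have hM2 : j + 2 ≤ M.card := by omega
      have hmiss : ∀ x ∈ M, (T.filter (fun A => x ∉ A)).card ≤ s := by
        intro x hx
        by_contra hxc
        push_neg at hxc
        obtain ⟨G, hGsub, hGcard⟩ := Finset.exists_subset_card_eq (Nat.succ_le_of_lt hxc)
        have hGT : G ⊆ T := hGsub.trans (Finset.filter_subset _ _)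
        have hGR : G ⊆ R := hGT.trans hTR
        have hGM : G.sup id ⊆ M := Finset.sup_le (fun A hA => hTM A (hGT hA))
        have := KP G hGR hGcard hGM
        have hxsup : x ∈ G.sup id := this ▸ hx
        rw [Finset.mem_sup] at hxsup
        obtain ⟨A, hA, hxA⟩ := hxsup
        exact (Finset.mem_filter.mp (hGsub hA)).2 hxA
      have hcount := count_miss M T j (fun A hA => ⟨hTM A hA, hTj A hA⟩)
      have hle : ∑ x ∈ M, (T.filter (fun A => x ∉ A)).card ≤ M.card * s := by
        calc ∑ x ∈ M, (T.filter (fun A => x ∉ A)).card ≤ ∑ _x ∈ M, s :=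
              Finset.sum_le_sum hmiss
          _ = M.card * s := by rw [Finset.sum_const, smul_eq_mul]
      rw [hcount] at hle
      have h2 : 2 ≤ M.card - j := by omega
      have hl : 2 * T.card ≤ T.card * (M.card - j) := by
        rw [mul_comm 2 T.card]; exact Nat.mul_le_mul_left T.card h2
      have hMs : M.card * s ≤ n * s := Nat.mul_le_mul_right s hMn
      have hns : n * s = s * n := mul_comm n s
      linarith
    by_cases hs2 : 2 ≤ s
    · -- s ≥ 2 : T injects into the j-subsets of M, too few colors, contradiction
      have hTsub : T ⊆ M.powersetCard j := by
        intro A hA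
        exact Finset.mem_powersetCard.mpr ⟨hTM A hA, hTj A hA⟩
      have hTle : T.card ≤ j + 1 := by
        have := Finset.card_le_card hTsub
        rwa [Finset.card_powersetCard, hMj1, Nat.choose_succ_self_right] at this
      have h2n : 2 * n ≤ s * n := Nat.mul_le_mul_right n hs2
      have : R.card ≤ T.card + k := by omega
      linarith
    · -- s = 1
      exfalso
      have hs1 : s = 1 := by omega
      subst hs1
      have hTk : k + 3 ≤ T.card := by omega
      obtain ⟨x, hx⟩ : ∃ x, x ∉ M := by
        by_contra hforall
        push_neg at hforall
        exact hMne (Finset.eq_univ_iff_forall.mpr hforall)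
      have hxnot : ∀ A ∈ T, x ∉ A := fun A hA h => hx (hTM A hA h)
      by_cases hEx : ∃ A ∈ T, c (insert x A) ≠ c A
      · -- copy with D = insert x A, E's from T
        obtain ⟨A, hAT, hAc⟩ := hEx
        have hbadD1 : (R.filter (fun B => c B = c (insert x A))).card ≤ 1 := hbad (c (insert x A))
        have hEscard : k ≤ ((T.erase A) \ (R.filter (fun B => c B = c (insert x A)))).card := by
          have h1 := Finset.card_le_card_sdiff_add_card (s := T.erase A)
            (t := R.filter (fun B => c B = c (insert x A)))
          have h2 : (T.erase A).card = T.card - 1 := Finset.card_erase_of_mem hAT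
          omega
        obtain ⟨Es, hEsSub, hEsCard⟩ := Finset.exists_subset_card_eq hEscard
        have hEsT : ∀ B ∈ Es, B ∈ T := fun B hB =>
          Finset.mem_of_mem_erase ((Finset.mem_sdiff.mp (hEsSub hB)).1)
        have hEsne : ∀ B ∈ Es, B ≠ A := fun B hB =>
          Finset.ne_of_mem_erase ((Finset.mem_sdiff.mp (hEsSub hB)).1)
        have hEsbad : ∀ B ∈ Es, B ∉ (R.filter (fun B' => c B' = c (insert x A))) :=
          fun B hB => (Finset.mem_sdiff.mp (hEsSub hB)).2
        have hEsR : ∀ B ∈ Es, B ∈ R := fun B hB => hTR (hEsT B hB)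
        have hxA : x ∉ A := hxnot A hAT
        refine hno (build_copy 1 k c {A} Es (insert x A) (Finset.card_singleton A) hEsCard
          ?_ ?_ ?_ ?_ ?_ ?_ ?_ ?_ ?_ ?_)
        · intro A' hA'
          rw [Finset.mem_singleton] at hA'
          subst hA'
          refine ⟨Finset.subset_insert x A', ?_⟩
          intro h
          have := Finset.card_insert_of_notMem hxA
          rw [← h] at this
          omega
        · intro A1 h1 A2 h2 hne
          rw [Finset.mem_singleton] at h1 h2
          exact absurd (h1.trans h2.symm) hne
        · intro B1 h1 B2 h2 hne
          exact not_subset_of_card_eq (by rw [hTj B1 (hEsT B1 h1), hTj B2 (hEsT B2 h2)]) hne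
        · intro A' hA' B hB
          rw [Finset.mem_singleton] at hA'
          subst hA'
          have hne : A' ≠ B := fun h => (hEsne B hB) h.symm
          exact ⟨not_subset_of_card_eq (by rw [hTj A' hAT, hTj B (hEsT B hB)]) hne,
            not_subset_of_card_eq (by rw [hTj A' hAT, hTj B (hEsT B hB)]) hne.symm⟩
        · intro B hB
          constructor
          · intro h
            exact (hxnot B (hEsT B hB)) (h (Finset.mem_insert_self x A))
          · intro h
            have hBA : B ⊆ A := (Finset.subset_insert_iff_of_notMem (hxnot B (hEsT B hB))).mp h
            have : B = A := Finset.eq_of_subset_of_card_le hBA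
              (by rw [hTj B (hEsT B hB), hTj A hAT])
            exact hEsne B hB this
        · intro A1 h1 A2 h2 _
          rw [Finset.mem_singleton] at h1 h2
          exact h1.trans h2.symm
        · exact fun B1 h1 B2 h2 h => hRinj B1 (hEsR B1 h1) B2 (hEsR B2 h2) h
        · intro A' hA' B hB h
          rw [Finset.mem_singleton] at hA'
          subst hA'
          exact hEsne B hB (hRinj A' (hTR hAT) B (hEsR B hB) h).symm
        · intro A' hA'
          rw [Finset.mem_singleton] at hA'
          subst hA'
          exact fun h => hAc h.symm
        · intro B hB h
          exact hEsbad B hB (Finset.mem_filter.mpr ⟨hEsR B hB, h⟩)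
      · -- all insertions keep colors: copy with D = M, E's = insert x B
        push_neg at hEx
        set bad := R.filter (fun A => c A = c M) with hbaddef
        have hbad1 : bad.card ≤ 1 := hbad (c M)
        have hWcard : k + 1 ≤ (T \ bad).card := by
          have := Finset.card_le_card_sdiff_add_card (s := T) (t := bad)
          omega
        obtain ⟨W, hWSub, hWCard⟩ := Finset.exists_subset_card_eq hWcard
        have hWT : ∀ B ∈ W, B ∈ T := fun B hB => (Finset.mem_sdiff.mp (hWSub hB)).1
        have hWbad : ∀ B ∈ W, B ∉ bad := fun B hB => (Finset.mem_sdiff.mp (hWSub hB)).2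
        have hWR : ∀ B ∈ W, B ∈ R := fun B hB => hTR (hWT B hB)
        obtain ⟨A, hAW⟩ := Finset.card_pos.mp (by omega : 0 < W.card)
        set Es0 := W.erase A with hEs0def
        have hEs0card : Es0.card = k := by
          rw [hEs0def, Finset.card_erase_of_mem hAW, hWCard]
          omega
        set Es := Es0.image (fun B => insert x B) with hEsdef
        have hinj : ∀ B1 ∈ Es0, ∀ B2 ∈ Es0, insert x B1 = insert x B2 → B1 = B2 := by
          intro B1 h1 B2 h2 h
          have hx1 : x ∉ B1 := hxnot B1 (hWT B1 (Finset.mem_of_mem_erase h1))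
          have hx2 : x ∉ B2 := hxnot B2 (hWT B2 (Finset.mem_of_mem_erase h2))
          rw [← Finset.erase_insert hx1, ← Finset.erase_insert hx2, h]
        have hEscard : Es.card = k := by
          rw [hEsdef, Finset.card_image_of_injOn (fun B1 h1 B2 h2 h => hinj B1 h1 B2 h2 h),
            hEs0card]
        have hmemEs : ∀ B' ∈ Es, ∃ B ∈ Es0, insert x B = B' := by
          intro B' hB'
          obtain ⟨B, hB, hBe⟩ := Finset.mem_image.mp hB'
          exact ⟨B, hB, hBe⟩
        have hEs0T : ∀ B ∈ Es0, B ∈ T := fun B hB => hWT B (Finset.mem_of_mem_erase hB)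
        have hEs0R : ∀ B ∈ Es0, B ∈ R := fun B hB => hTR (hEs0T B hB)
        have hEs0x : ∀ B ∈ Es0, x ∉ B := fun B hB => hxnot B (hEs0T B hB)
        have hcEs : ∀ B ∈ Es0, c (insert x B) = c B := fun B hB => hEx B (hEs0T B hB)
        have hAT : A ∈ T := hWT A hAW
        have hAx : x ∉ A := hxnot A hAT
        refine hno (build_copy 1 k c {A} Es M (Finset.card_singleton A) hEscard
          ?_ ?_ ?_ ?_ ?_ ?_ ?_ ?_ ?_ ?_)
        · intro A' hA'
          rw [Finset.mem_singleton] at hA'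
          subst hA'
          refine ⟨hTM A' hAT, ?_⟩
          intro h
          have hc1 := hTj A' hAT
          rw [h] at hc1
          omega
        · intro A1 h1 A2 h2 hne
          rw [Finset.mem_singleton] at h1 h2
          exact absurd (h1.trans h2.symm) hne
        · intro B1' h1 B2' h2 hne hsub
          obtain ⟨B1, hB1, rfl⟩ := hmemEs B1' h1
          obtain ⟨B2, hB2, rfl⟩ := hmemEs B2' h2
          have : B1 ⊆ insert x B2 := (Finset.subset_insert x B1).trans hsub
          have hB12 : B1 ⊆ B2 := (Finset.subset_insert_iff_of_notMem (hEs0x B1 hB1)).mp this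
          have : B1 = B2 := Finset.eq_of_subset_of_card_le hB12
            (by rw [hTj B1 (hEs0T B1 hB1), hTj B2 (hEs0T B2 hB2)])
          exact hne (by rw [this])
        · intro A' hA' B' hB'
          rw [Finset.mem_singleton] at hA'
          subst hA'
          obtain ⟨B, hB, rfl⟩ := hmemEs B' hB'
          have hne : A' ≠ B := Ne.symm (Finset.ne_of_mem_erase hB)
          constructor
          · intro h
            have hAB : A' ⊆ B := (Finset.subset_insert_iff_of_notMem hAx).mp h
            exact hne (Finset.eq_of_subset_of_card_le hAB
              (by rw [hTj A' hAT, hTj B (hEs0T B hB)]))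
          · intro h
            exact hAx (h (Finset.mem_insert_self x B))
        · intro B' hB'
          obtain ⟨B, hB, rfl⟩ := hmemEs B' hB'
          constructor
          · intro h
            have hMB : M ⊆ B := (Finset.subset_insert_iff_of_notMem hx).mp h
            have := Finset.card_le_card hMB
            have := hTj B (hEs0T B hB)
            omega
          · intro h
            exact hx (h (Finset.mem_insert_self x B))
        · intro A1 h1 A2 h2 _
          rw [Finset.mem_singleton] at h1 h2
          exact h1.trans h2.symm
        · intro B1' h1 B2' h2 h
          obtain ⟨B1, hB1, rfl⟩ := hmemEs B1' h1
          obtain ⟨B2, hB2, rfl⟩ := hmemEs B2' h2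
          rw [hcEs B1 hB1, hcEs B2 hB2] at h
          rw [hRinj B1 (hEs0R B1 hB1) B2 (hEs0R B2 hB2) h]
        · intro A' hA' B' hB' h
          rw [Finset.mem_singleton] at hA'
          subst hA'
          obtain ⟨B, hB, rfl⟩ := hmemEs B' hB'
          rw [hcEs B hB] at h
          have : A' = B := hRinj A' (hTR hAT) B (hEs0R B hB) h
          exact Finset.ne_of_mem_erase hB this.symm
        · intro A' hA' h
          rw [Finset.mem_singleton] at hA'
          subst hA'
          exact hWbad A' hAW (Finset.mem_filter.mpr ⟨hTR hAT, h⟩)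
        · intro B' hB' h
          obtain ⟨B, hB, rfl⟩ := hmemEs B' hB'
          rw [hcEs B hB] at h
          exact hWbad B (Finset.mem_of_mem_erase hB) (Finset.mem_filter.mpr ⟨hEs0R B hB, h⟩)

set_option maxHeartbeats 1000000 in
/-- For `n` large, any coloring of `2^[n]` with no rainbow strong copy of `∧_s + A_k`
uses at most `(n−1)(sn/2 + k + 1) + 2` colors. -/
theorem stmt19 (s k : ℕ) (hs : 1 ≤ s) :
    ∃ N : ℕ, ∀ n : ℕ, N ≤ n → ∀ c : Finset (Fin n) → ℕ,
      (¬∃ (C : Fin s → Finset (Fin n)) (D : Finset (Fin n)) (E : Fin k → Finset (Fin n)),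
        (∀ i, C i ⊆ D ∧ C i ≠ D) ∧
        (∀ i j, i ≠ j → ¬C i ⊆ C j) ∧
        (∀ i j, i ≠ j → ¬E i ⊆ E j) ∧
        (∀ i j, ¬C i ⊆ E j ∧ ¬E j ⊆ C i) ∧
        (∀ j, ¬D ⊆ E j ∧ ¬E j ⊆ D) ∧
        (∀ i j, i ≠ j → c (C i) ≠ c (C j)) ∧
        (∀ i j, i ≠ j → c (E i) ≠ c (E j)) ∧
        (∀ i j, c (C i) ≠ c (E j)) ∧
        (∀ i, c (C i) ≠ c D) ∧ (∀ j, c (E j) ≠ c D)) →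
      ((Finset.univ.image c).card : ℝ) ≤
        ((n : ℝ) - 1) * ((s : ℝ) * n / 2 + k + 1) + 2 := by
  classical
  refine ⟨4*k + 4*s + 14, fun n hn c hno' => ?_⟩
  have hno : ¬ hasCopy s k n c := hno'
  have hn4 : 18 ≤ n := by omega
  -- decompose colors by levels
  set f : ℕ → ℕ := fun j =>
    (((Finset.univ.filter (fun A : Finset (Fin n) => A.card = j)).image c).card) with hfdef
  have htot : (Finset.univ.image c).card ≤ ∑ j ∈ Finset.range (n+1), f j := by
    have hsub : (Finset.univ.image c) ⊆ (Finset.range (n+1)).biUnion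
        (fun j => (Finset.univ.filter (fun A : Finset (Fin n) => A.card = j)).image c) := by
      intro b hb
      obtain ⟨A, _, rfl⟩ := Finset.mem_image.mp hb
      refine Finset.mem_biUnion.mpr ⟨A.card, ?_, ?_⟩
      · refine Finset.mem_range.mpr (Nat.lt_succ_of_le ?_)
        exact le_trans (Finset.card_le_univ A) (by simp)
      · exact Finset.mem_image.mpr ⟨A, Finset.mem_filter.mpr ⟨Finset.mem_univ A, rfl⟩, rfl⟩
    exact le_trans (Finset.card_le_card hsub) (Finset.card_biUnion_le)
  -- bounds on extreme levels
  have hf0 : f 0 ≤ 1 := by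
    have : (Finset.univ.filter (fun A : Finset (Fin n) => A.card = 0)) ⊆ {∅} := by
      intro A hA
      rw [Finset.mem_singleton]
      exact Finset.card_eq_zero.mp (Finset.mem_filter.mp hA).2
    calc f 0 ≤ (Finset.univ.filter (fun A : Finset (Fin n) => A.card = 0)).card :=
          Finset.card_image_le
      _ ≤ ({∅} : Finset (Finset (Fin n))).card := Finset.card_le_card this
      _ = 1 := Finset.card_singleton _
  have hfn : f n ≤ 1 := by
    have : (Finset.univ.filter (fun A : Finset (Fin n) => A.card = n)) ⊆ {Finset.univ} := by
      intro A hA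
      rw [Finset.mem_singleton]
      have := (Finset.mem_filter.mp hA).2
      apply Finset.eq_univ_of_card
      rw [this, Fintype.card_fin]
    calc f n ≤ (Finset.univ.filter (fun A : Finset (Fin n) => A.card = n)).card :=
          Finset.card_image_le
      _ ≤ ({Finset.univ} : Finset (Finset (Fin n))).card := Finset.card_le_card this
      _ = 1 := Finset.card_singleton _
  have hfn1 : f (n-1) ≤ n := by
    have hsub : (Finset.univ.filter (fun A : Finset (Fin n) => A.card = n-1)) ⊆
        (Finset.univ : Finset (Fin n)).powersetCard (n-1) := by
      intro A hA
      exact Finset.mem_powersetCard.mpr ⟨Finset.subset_univ A, (Finset.mem_filter.mp hA).2⟩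
    calc f (n-1) ≤ (Finset.univ.filter (fun A : Finset (Fin n) => A.card = n-1)).card :=
          Finset.card_image_le
      _ ≤ ((Finset.univ : Finset (Fin n)).powersetCard (n-1)).card := Finset.card_le_card hsub
      _ = n := by
          rw [Finset.card_powersetCard, Finset.card_univ, Fintype.card_fin]
          have h1 : n - (n - 1) = 1 := by omega
          have h2 := Nat.choose_symm (by omega : n - 1 ≤ n)
          rw [h1] at h2
          rw [← h2, Nat.choose_one_right]
  -- bound on middle levels
  have hmid : ∀ j ∈ Finset.Icc 1 (n-2), 2 * f j ≤ s*n + 2*k := by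
    intro j hj
    rw [Finset.mem_Icc] at hj
    exact level_bound hs hn j hj.1 (by omega) c hno
  -- sum decomposition
  have hdecomp : Finset.range (n+1) =
      insert 0 (insert (n-1) (insert n (Finset.Icc 1 (n-2)))) := by
    ext m
    simp only [Finset.mem_range, Finset.mem_insert, Finset.mem_Icc]
    omega
  have hsum : ∑ j ∈ Finset.range (n+1), f j
      = f 0 + (f (n-1) + (f n + ∑ j ∈ Finset.Icc 1 (n-2), f j)) := by
    rw [hdecomp]
    rw [Finset.sum_insert (by simp only [Finset.mem_insert, Finset.mem_Icc]; omega),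
      Finset.sum_insert (by simp only [Finset.mem_insert, Finset.mem_Icc]; omega),
      Finset.sum_insert (by simp only [Finset.mem_Icc]; omega)]
  have hmidsum : 2 * ∑ j ∈ Finset.Icc 1 (n-2), f j ≤ (n-2) * (s*n + 2*k) := by
    rw [Finset.mul_sum]
    calc ∑ j ∈ Finset.Icc 1 (n-2), 2 * f j ≤ ∑ _j ∈ Finset.Icc 1 (n-2), (s*n + 2*k) :=
          Finset.sum_le_sum hmid
      _ = (n-2) * (s*n + 2*k) := by
          rw [Finset.sum_const, smul_eq_mul, Nat.card_Icc]
          have h1 : n - 2 + 1 - 1 = n - 2 := by omega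
          rw [h1]
  have hkey : 2 * (Finset.univ.image c).card ≤ 4 + 2*n + (n-2) * (s*n + 2*k) := by
    have := hsum
    omega
  -- cast to ℝ
  have hcast : (2 * (Finset.univ.image c).card : ℝ) ≤ 4 + 2*n + ((n:ℝ)-2) * (s*n + 2*k) := by
    have h2n : (2:ℕ) ≤ n := by omega
    calc (2 * (Finset.univ.image c).card : ℝ)
        = ((2 * (Finset.univ.image c).card : ℕ) : ℝ) := by push_cast; ring
      _ ≤ ((4 + 2*n + (n-2) * (s*n + 2*k) : ℕ) : ℝ) := by exact_mod_cast hkey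
      _ = 4 + 2*n + ((n:ℝ)-2) * (s*n + 2*k) := by
          push_cast [Nat.cast_sub h2n]
          ring
  have hnR : (18:ℝ) ≤ n := by exact_mod_cast hn4
  have hsR : (1:ℝ) ≤ s := by exact_mod_cast hs
  have hkR : (0:ℝ) ≤ k := by positivity
  have hsn2 : (2:ℝ) ≤ (s:ℝ) * n := by nlinarith
  nlinarith [hcast, hsn2]
end
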